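/- arXiv:2208.06791 — 6 statements merged into one kernel-verified Lean document; each statement's English description precedes it below -/
import Mathlib

section
/- For all integers n ≥ k+1, the probability that X_n is a j-recent-k-record equals binom(k,j) · Σ_{i=1}^∞ S_i^j · C_{i-1}^{k-j} · p_i, where the sum runs over all positive integers i. -/
/-!
Split the event according to the value `i + 1` of `Xₙ` and the set `T` of the `j` indices
`m ∈ [n - k, n - 1]` with `Xₘ ≥ i + 1`. For fixed `i` and `T` the event is an intersection of
preimages under the independent, identically distributed `Xₘ`, so its probability is
`S_{i+1}^j C_i^{k-j} p_{i+1}`; there are `C(k, j)` choices of `T`.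
-/

open MeasureTheory ProbabilityTheory Finset Function

theorem Finset.prod_ite_mem_of_subset {ι M : Type*} [CommMonoid M] [DecidableEq ι]
    {I T : Finset ι} (hTI : T ⊆ I) (a b : M) :
    ∏ m ∈ I, (if m ∈ T then a else b) = a ^ #T * b ^ (#I - #T) := by
  rw [prod_ite, prod_const, prod_const, filter_not, filter_mem_eq_inter, inter_eq_right.2 hTI,
    card_sdiff_of_subset hTI]

namespace MeasureTheory

theorem measureReal_iUnion₀ {α ι : Type*} [MeasurableSpace α] {μ : Measure α}
    [IsFiniteMeasure μ] [Countable ι] {f : ι → Set α} (hd : Pairwise (AEDisjoint μ on f))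
    (hm : ∀ i, NullMeasurableSet (f i) μ) :
    μ.real (⋃ i, f i) = ∑' i, μ.real (f i) := by
  rw [measureReal_def, measure_iUnion₀ hd hm, ENNReal.tsum_toReal_eq fun i => measure_ne_top μ _]
  rfl

end MeasureTheory

section Pattern

variable {Ω ι β : Type*} {X : ι → Ω → β}
  [DecidableEq ι] {I : Finset ι} {A : Set β} [DecidablePred (· ∈ A)]

theorem setOf_filter_mem_eq_eq_biInter {T : Finset ι} (hTI : T ⊆ I) :
    {ω | {m ∈ I | X m ω ∈ A} = T}
      = ⋂ m ∈ I, X m ⁻¹' (if m ∈ T then A else Aᶜ) := by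
  ext ω
  simp only [Set.mem_ofPred_eq, Set.mem_iInter, Set.mem_preimage, Finset.ext_iff, mem_filter]
  refine ⟨fun h m hm => ?_, fun h m => ?_⟩
  · split_ifs with hmT
    · exact ((h m).2 hmT).2
    · exact fun hA => hmT ((h m).1 ⟨hm, hA⟩)
  · by_cases hm : m ∈ I
    · have hX := h m hm
      split_ifs at hX with hmT
      · exact iff_of_true ⟨hm, hX⟩ hmT
      · exact iff_of_false (fun h' => hX h'.2) hmT
    · exact iff_of_false (fun h' => hm h'.1) fun hmT => hm (hTI hmT)

theorem setOf_card_filter_mem_eq_eq_biUnion (j : ℕ) :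
    {ω | #{m ∈ I | X m ω ∈ A} = j}
      = ⋃ T ∈ I.powersetCard j, ⋂ m ∈ I, X m ⁻¹' (if m ∈ T then A else Aᶜ) := by
  ext ω
  simp only [Set.mem_ofPred_eq, Set.mem_iUnion, mem_powersetCard, exists_prop]
  constructor
  · intro h
    refine ⟨_, ⟨filter_subset _ _, h⟩, ?_⟩
    rw [← setOf_filter_mem_eq_eq_biInter (filter_subset _ I)]
    rfl
  · rintro ⟨T, ⟨hTI, rfl⟩, hω⟩
    rw [← setOf_filter_mem_eq_eq_biInter hTI] at hω
    exact congrArg card hω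

end Pattern

section Independence

variable {Ω ι β : Type*} [MeasurableSpace Ω] [MeasurableSpace β] {P : Measure Ω}
  {X : ι → Ω → β} [DecidableEq ι] {I : Finset ι}

theorem ProbabilityTheory.iIndepFun.measure_preimage_inter_biInter_preimage
    (hX : iIndepFun X P) {n : ι} (hn : n ∉ I) {B : Set β} (hB : MeasurableSet B)
    {s : ι → Set β} (hs : ∀ m ∈ I, MeasurableSet (s m)) :
    P (X n ⁻¹' B ∩ ⋂ m ∈ I, X m ⁻¹' s m)
      = P (X n ⁻¹' B) * ∏ m ∈ I, P (X m ⁻¹' s m) := by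
  have hupdate : ∀ m ∈ I, update s n B m = s m := fun m hm =>
    update_of_ne (ne_of_mem_of_not_mem hm hn) _ _
  have h := hX.measure_inter_preimage_eq_mul (insert n I) (sets := update s n B)
    (forall_mem_insert _ _ _ |>.2 ⟨by rwa [update_self], fun m hm => hupdate m hm ▸ hs m hm⟩)
  rwa [set_biInter_insert, prod_insert hn, update_self,
    Set.iInter₂_congr fun m hm => congrArg (X m ⁻¹' ·) (hupdate m hm),
    prod_congr rfl fun m hm => congrArg (P <| X m ⁻¹' ·) (hupdate m hm)] at h

variable {A : Set β} [DecidablePred (· ∈ A)]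

theorem nullMeasurableSet_setOf_card_filter_mem_eq (hX : ∀ m, AEMeasurable (X m) P)
    (hA : MeasurableSet A) (j : ℕ) :
    NullMeasurableSet {ω | #{m ∈ I | X m ω ∈ A} = j} P := by
  rw [setOf_card_filter_mem_eq_eq_biUnion]
  refine .biUnion (countable_toSet _) fun T _ => .biInter (countable_toSet _) fun m _ => ?_
  exact (hX m).nullMeasurableSet_preimage (by split_ifs; exacts [hA, hA.compl])

theorem ProbabilityTheory.iIndepFun.measureReal_preimage_inter_card_filter_mem_eq
    [IsFiniteMeasure P] (hX : iIndepFun X P) {i₀ : ι}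
    (hident : ∀ m, IdentDistrib (X m) (X i₀) P P) {n : ι} (hn : n ∉ I) {B : Set β}
    (hA : MeasurableSet A) (hB : MeasurableSet B) (j : ℕ) :
    P.real (X n ⁻¹' B ∩ {ω | #{m ∈ I | X m ω ∈ A} = j})
      = (#I).choose j * (P.real (X i₀ ⁻¹' A) ^ j * P.real (X i₀ ⁻¹' Aᶜ) ^ (#I - j)
          * P.real (X i₀ ⁻¹' B)) := by
  set pattern : Finset ι → ι → Set β := fun T m => if m ∈ T then A else Aᶜ
  have hpattern_meas : ∀ T m, MeasurableSet (pattern T m) := fun _ _ => by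
    simp only [pattern]
    split_ifs
    exacts [hA, hA.compl]
  have hpattern : ∀ T ∈ I.powersetCard j,
      P.real (X n ⁻¹' B ∩ ⋂ m ∈ I, X m ⁻¹' pattern T m)
        = P.real (X i₀ ⁻¹' A) ^ j * P.real (X i₀ ⁻¹' Aᶜ) ^ (#I - j)
          * P.real (X i₀ ⁻¹' B) := by
    intro T hT
    obtain ⟨hTI, rfl⟩ := mem_powersetCard.1 hT
    have hlaw : ∀ m, P (X m ⁻¹' pattern T m)
        = if m ∈ T then P (X i₀ ⁻¹' A) else P (X i₀ ⁻¹' Aᶜ) := fun m => by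
      simp only [pattern]
      split_ifs
      exacts [(hident m).measure_mem_eq hA, (hident m).measure_mem_eq hA.compl]
    rw [measureReal_def, hX.measure_preimage_inter_biInter_preimage hn hB
      fun m _ => hpattern_meas T m, prod_congr rfl fun m _ => hlaw m,
      prod_ite_mem_of_subset hTI, (hident n).measure_mem_eq hB]
    simp only [measureReal_def, ENNReal.toReal_mul, ENNReal.toReal_pow]
    ring
  have hdisj : Set.Pairwise ↑(I.powersetCard j)
      (AEDisjoint P on fun T => X n ⁻¹' B ∩ ⋂ m ∈ I, X m ⁻¹' pattern T m) := by
    intro T hT T' hT' hne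
    refine Disjoint.aedisjoint (.mono Set.inter_subset_right Set.inter_subset_right ?_)
    rw [← setOf_filter_mem_eq_eq_biInter (mem_powersetCard.1 hT).1,
      ← setOf_filter_mem_eq_eq_biInter (mem_powersetCard.1 hT').1]
    exact Set.disjoint_left.2 fun ω hω hω' => hne (hω.symm.trans hω')
  have hnull : ∀ T ∈ I.powersetCard j,
      NullMeasurableSet (X n ⁻¹' B ∩ ⋂ m ∈ I, X m ⁻¹' pattern T m) P := fun T _ =>
    ((hident n).aemeasurable_fst.nullMeasurableSet_preimage hB).inter
      (.biInter (countable_toSet _) fun m _ =>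
        (hident m).aemeasurable_fst.nullMeasurableSet_preimage (hpattern_meas T m))
  rw [setOf_card_filter_mem_eq_eq_biUnion, Set.inter_iUnion₂,
    measureReal_biUnion_finset₀ hdisj hnull, sum_congr rfl hpattern, sum_const,
    card_powersetCard, nsmul_eq_mul]

end Independence

theorem recent_k_record_prob_general
    {Ω : Type*} [MeasurableSpace Ω] (P : Measure Ω) [IsProbabilityMeasure P]
    (X : ℕ → Ω → ℕ)
    (hXpos : ∀ a ω, 1 ≤ X a ω)
    (hindep : iIndepFun X P)
    (hident : ∀ a, IdentDistrib (X a) (X 1) P P)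
    (k j : ℕ)
    (p S C : ℕ → ℝ)
    (hp : ∀ l, p l = (P {ω | X 1 ω = l}).toReal)
    (hS : ∀ i, S i = (P {ω | i ≤ X 1 ω}).toReal)
    (hC : ∀ i, C i = (P {ω | X 1 ω ≤ i}).toReal)
    (n : ℕ) (hn : k + 1 ≤ n) :
    (P {ω | ((Finset.Icc (n - k) (n - 1)).filter fun m => X n ω ≤ X m ω).card = j}).toReal
      = (k.choose j : ℝ) * ∑' i : ℕ, S (i + 1) ^ j * C i ^ (k - j) * p (i + 1) := by
  set I := Icc (n - k) (n - 1)
  have hnI : n ∉ I := by simp only [I, mem_Icc]; omega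
  have hcard : #I = k := by simp only [I, Nat.card_Icc]; omega
  set E : ℕ → Set Ω := fun i =>
    X n ⁻¹' {i + 1} ∩ {ω | #{m ∈ I | X m ω ∈ Set.Ici (i + 1)} = j}
  have hevent : {ω | #{m ∈ I | X n ω ≤ X m ω} = j} = ⋃ i, E i := by
    ext ω
    simp only [E, Set.mem_iUnion, Set.mem_inter_iff, Set.mem_preimage, Set.mem_singleton_iff,
      Set.mem_ofPred_eq, Set.mem_Ici]
    refine ⟨fun h => ⟨X n ω - 1, ?_, ?_⟩, fun ⟨i, hi, h⟩ => by rwa [hi]⟩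
    · have := hXpos n ω; omega
    · rwa [Nat.sub_add_cancel (hXpos n ω)]
  have hdisj : Pairwise (AEDisjoint P on E) := fun i i' hne =>
    Disjoint.aedisjoint (.mono Set.inter_subset_left Set.inter_subset_left
      ((Set.disjoint_singleton.2 (by omega)).preimage _))
  have hnull : ∀ i, NullMeasurableSet (E i) P := fun i =>
    ((hident n).aemeasurable_fst.nullMeasurableSet_preimage (measurableSet_singleton _)).inter
      (nullMeasurableSet_setOf_card_filter_mem_eq (fun m => (hident m).aemeasurable_fst)
        measurableSet_Ici j)
  have hterm : ∀ i, P.real (E i) = k.choose j * (S (i + 1) ^ j * C i ^ (k - j) * p (i + 1)) := by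
    intro i
    have hcompl : X 1 ⁻¹' (Set.Ici (i + 1))ᶜ = {ω | X 1 ω ≤ i} := by ext; simp
    rw [hindep.measureReal_preimage_inter_card_filter_mem_eq hident hnI measurableSet_Ici
      (measurableSet_singleton _), hcard, hcompl, hS, hC, hp]
    rfl
  rw [← measureReal_def, hevent, measureReal_iUnion₀ hdisj hnull, tsum_congr hterm,
    tsum_mul_left]

/-- For all integers `n ≥ k+1`, the probability that `Xₙ` is a `j`-recent-`k`-record
(exactly `j` of `X_{n-k}, …, X_{n-1}` are `≥ Xₙ`) equals
`C(k,j) * ∑_{i=1}^∞ Sᵢ^j * C_{i-1}^{k-j} * pᵢ`. -/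
theorem recent_k_record_prob
    {Ω : Type*} [MeasurableSpace Ω] (P : Measure Ω) [IsProbabilityMeasure P]
    (X : ℕ → Ω → ℕ) (hXmeas : ∀ a, Measurable (X a))
    (hXpos : ∀ a ω, 1 ≤ X a ω)
    (hindep : iIndepFun X P)
    (hident : ∀ a, IdentDistrib (X a) (X 1) P P)
    (k j : ℕ) (hk : 1 ≤ k) (hj : j ≤ k)
    (p S C : ℕ → ℝ)
    (hp : ∀ l, p l = (P {ω | X 1 ω = l}).toReal)
    (hS : ∀ i, S i = (P {ω | i ≤ X 1 ω}).toReal)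
    (hC : ∀ i, C i = (P {ω | X 1 ω ≤ i}).toReal)
    (n : ℕ) (hn : k + 1 ≤ n) :
    (P {ω | ((Finset.Icc (n - k) (n - 1)).filter fun m => X n ω ≤ X m ω).card = j}).toReal
      = (k.choose j : ℝ) * ∑' i : ℕ, S (i + 1) ^ j * C i ^ (k - j) * p (i + 1) :=
  recent_k_record_prob_general P X hXpos hindep hident k j p S C hp hS hC n hn
end

section
/- Let n ≥ k+1 and let i < m be positive integers. Let B be the event {X_n = i and exactly j of X_{n-k}, …, X_{n-1} are ≥ i}, and assume P(B) > 0. Then P(X_{n+1} = m, exactly j of X_{n-k+1}, …, X_n are ≥ m, and X_{n-k} < i | B) = (S_m/S_i)^j · ((k-j)/k) · p_m. -/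
open MeasureTheory ProbabilityTheory Finset

/-!
Independence turns every event fixing the values of finitely many `X_t` into a product, and the
event "exactly `j` of the `X_t`, `t ∈ w`, lie in `H`, the others in a disjoint `L`" is the disjoint
union, over the `j`-subsets of `w`, of such events, so it has probability
`C(#w, j) P(H)^j P(L)^(#w - j)`. This gives `P B = C(k, j) p_i S_i^j C_{i-1}^(k-j)`.
On `B ∩ A`, `X_{n-k} < i` and `X_n = i < m` force the `j` values `≥ i` among
`X_{n-k+1}, …, X_{n-1}` to be exactly the `j` values `≥ m`, all others being `< i`; hence
`P (B ∩ A) = C(k-1, j) p_m p_i C_{i-1} S_m^j C_{i-1}^(k-1-j)`, and the ratio is the claim because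
`C(k-1, j) k = C(k, j) (k - j)`.
-/

lemma Finset.card_filter_eq_and_card_filter_eq_iff {α : Type*} {s : Finset α} {p q : α → Prop}
    [DecidablePred p] [DecidablePred q] (hqp : ∀ x ∈ s, q x → p x) {j : ℕ} :
    #{x ∈ s | p x} = j ∧ #{x ∈ s | q x} = j ↔ (∀ x ∈ s, p x → q x) ∧ #{x ∈ s | q x} = j := by
  have hsub : {x ∈ s | q x} ⊆ {x ∈ s | p x} := fun x hx => by
    rw [mem_filter] at hx ⊢
    exact ⟨hx.1, hqp x hx.1 hx.2⟩
  constructor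
  · rintro ⟨hp, hq⟩
    have heq := eq_of_subset_of_card_le hsub (hp.trans hq.symm).le
    refine ⟨fun x hx hpx => ?_, hq⟩
    exact (mem_filter.1 (heq ▸ mem_filter.2 ⟨hx, hpx⟩)).2
  · rintro ⟨hpq, hq⟩
    rwa [filter_congr fun x hx => ⟨hpq x hx, hqp x hx⟩, and_self]

lemma Finset.prod_ite_mem_eq_pow_mul_pow {ι M : Type*} [DecidableEq ι] [CommMonoid M]
    {T w : Finset ι} (hT : T ⊆ w) (a b : M) :
    ∏ t ∈ w, (if t ∈ T then a else b) = a ^ #T * b ^ (#w - #T) := by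
  rw [prod_ite, filter_mem_eq_inter, inter_eq_right.2 hT, ← sdiff_eq_filter, prod_const,
    prod_const, card_sdiff_of_subset hT]

lemma ProbabilityTheory.cond_apply₀ {Ω : Type*} [MeasurableSpace Ω] {μ : Measure Ω} {s : Set Ω}
    (hs : NullMeasurableSet s μ) (t : Set Ω) : μ[t | s] = (μ s)⁻¹ * μ (s ∩ t) := by
  rw [cond, Measure.smul_apply, Measure.restrict_apply₀' hs, Set.inter_comm, smul_eq_mul]

section Cylinder

variable {Ω ι β : Type*} [MeasurableSpace Ω] [MeasurableSpace β] [DiscreteMeasurableSpace β]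
  {P : Measure Ω} {X : ι → Ω → β}

lemma nullMeasurableSet_biInter_preimage (hX : ∀ a, AEMeasurable (X a) P) (s : Finset ι)
    (f : ι → Set β) : NullMeasurableSet (⋂ t ∈ s, X t ⁻¹' f t) P :=
  s.nullMeasurableSet_biInter fun t _ => (hX t).nullMeasurableSet_preimage .of_discrete

variable {Y : Ω → β}

lemma measure_biInter_preimage_of_iid (hindep : iIndepFun X P)
    (hident : ∀ a, IdentDistrib (X a) Y P P) (s : Finset ι) (f : ι → Set β) :
    P (⋂ t ∈ s, X t ⁻¹' f t) = ∏ t ∈ s, P (Y ⁻¹' f t) := by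
  rw [hindep.meas_biInter fun t _ => ⟨f t, .of_discrete, rfl⟩]
  exact prod_congr rfl fun t _ => (hident t).measure_mem_eq .of_discrete

lemma measure_biInter_inter_biInter_of_iid [DecidableEq ι] (hindep : iIndepFun X P)
    (hident : ∀ a, IdentDistrib (X a) Y P P) {G w : Finset ι} (hGw : Disjoint G w)
    (g f : ι → Set β) :
    P ((⋂ t ∈ G, X t ⁻¹' g t) ∩ ⋂ t ∈ w, X t ⁻¹' f t)
      = (∏ t ∈ G, P (Y ⁻¹' g t)) * ∏ t ∈ w, P (Y ⁻¹' f t) := by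
  have hg : ∀ t ∈ G, G.piecewise g f t = g t := fun t ht => piecewise_eq_of_mem _ _ _ ht
  have hf : ∀ t ∈ w, G.piecewise g f t = f t :=
    fun t ht => piecewise_eq_of_notMem _ _ _ (disjoint_right.mp hGw ht)
  calc P ((⋂ t ∈ G, X t ⁻¹' g t) ∩ ⋂ t ∈ w, X t ⁻¹' f t)
      = P (⋂ t ∈ G ∪ w, X t ⁻¹' G.piecewise g f t) := by
        rw [set_biInter_inter, Set.iInter₂_congr fun t ht => by rw [← hg t ht],
          Set.iInter₂_congr fun t (ht : t ∈ w) => by rw [← hf t ht]]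
    _ = ∏ t ∈ G ∪ w, P (Y ⁻¹' G.piecewise g f t) :=
        measure_biInter_preimage_of_iid hindep hident _ _
    _ = (∏ t ∈ G, P (Y ⁻¹' g t)) * ∏ t ∈ w, P (Y ⁻¹' f t) := by
        rw [prod_union hGw, prod_congr rfl fun t ht => by rw [hg t ht],
          prod_congr rfl fun t (ht : t ∈ w) => by rw [hf t ht]]

end Cylinder

section Count

variable {Ω ι β : Type*} [DecidableEq ι] {X : ι → Ω → β} {w : Finset ι}
  {H L : Set β} [DecidablePred (· ∈ H)]

lemma mem_biInter_preimage_ite_iff (hHL : Disjoint H L) {T : Finset ι} (hT : T ⊆ w) (ω : Ω) :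
    ω ∈ ⋂ t ∈ w, X t ⁻¹' (if t ∈ T then H else L)
      ↔ (∀ t ∈ w, X t ω ∈ H ∪ L) ∧ {t ∈ w | X t ω ∈ H} = T := by
  have hL : ∀ t, X t ω ∈ L → X t ω ∉ H := fun t h => Set.disjoint_right.mp hHL h
  have hTw : ∀ t ∈ T, t ∈ w := fun t ht => hT ht
  simp only [Set.mem_iInter, Set.mem_preimage, Finset.ext_iff, mem_filter, Set.mem_union]
  grind

lemma setOf_card_filter_eq_eq_biUnion (hHL : Disjoint H L) (j : ℕ) :
    {ω | (∀ t ∈ w, X t ω ∈ H ∪ L) ∧ #{t ∈ w | X t ω ∈ H} = j}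
      = ⋃ T ∈ w.powersetCard j, ⋂ t ∈ w, X t ⁻¹' (if t ∈ T then H else L) := by
  ext ω
  simp only [Set.mem_ofPred_eq, Set.mem_iUnion, mem_powersetCard, exists_prop]
  constructor
  · rintro ⟨hHL', rfl⟩
    exact ⟨_, ⟨filter_subset _ _, rfl⟩,
      (mem_biInter_preimage_ite_iff hHL (filter_subset _ _) ω).2 ⟨hHL', rfl⟩⟩
  · rintro ⟨T, ⟨hT, rfl⟩, hω⟩
    obtain ⟨hHL', rfl⟩ := (mem_biInter_preimage_ite_iff hHL hT ω).1 hω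
    exact ⟨hHL', rfl⟩

variable [MeasurableSpace Ω] [MeasurableSpace β] [DiscreteMeasurableSpace β] {P : Measure Ω}

lemma nullMeasurableSet_setOf_card_filter_eq (hX : ∀ a, AEMeasurable (X a) P)
    (hHL : Disjoint H L) (j : ℕ) :
    NullMeasurableSet {ω | (∀ t ∈ w, X t ω ∈ H ∪ L) ∧ #{t ∈ w | X t ω ∈ H} = j} P := by
  rw [setOf_card_filter_eq_eq_biUnion hHL]
  exact Finset.nullMeasurableSet_biUnion _ fun T _ => nullMeasurableSet_biInter_preimage hX _ _

variable {Y : Ω → β}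

lemma measure_biInter_inter_card_filter_eq_of_iid (hindep : iIndepFun X P)
    (hident : ∀ a, IdentDistrib (X a) Y P P) {G : Finset ι} (hGw : Disjoint G w) (g : ι → Set β)
    (hHL : Disjoint H L) (j : ℕ) :
    P ((⋂ t ∈ G, X t ⁻¹' g t) ∩ {ω | (∀ t ∈ w, X t ω ∈ H ∪ L) ∧ #{t ∈ w | X t ω ∈ H} = j})
      = (#w).choose j * ((∏ t ∈ G, P (Y ⁻¹' g t)) * P (Y ⁻¹' H) ^ j * P (Y ⁻¹' L) ^ (#w - j)) := by
  have hX : ∀ a, AEMeasurable (X a) P := fun a => (hident a).aemeasurable_fst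
  rw [setOf_card_filter_eq_eq_biUnion hHL, Set.inter_iUnion₂, measure_biUnion_finset₀]
  · rw [← card_powersetCard, ← nsmul_eq_mul, ← sum_const]
    refine sum_congr rfl fun T hT => ?_
    rw [mem_powersetCard] at hT
    rw [measure_biInter_inter_biInter_of_iid hindep hident hGw, mul_assoc, ← hT.2,
      ← prod_ite_mem_eq_pow_mul_pow hT.1]
    simp only [apply_ite]
  · intro T hT T' hT' hne
    refine Disjoint.aedisjoint (Set.disjoint_left.2 fun ω h h' => hne ?_)
    rw [mem_coe, mem_powersetCard] at hT hT'
    exact ((mem_biInter_preimage_ite_iff hHL hT.1 ω).1 h.2).2.symm.trans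
      ((mem_biInter_preimage_ite_iff hHL hT'.1 ω).1 h'.2).2
  · exact fun T _ => (nullMeasurableSet_biInter_preimage hX _ _).inter
      (nullMeasurableSet_biInter_preimage hX _ _)

end Count

section RecordEvents

variable {Ω ι β : Type*} [LinearOrder β] {X : ι → Ω → β} {w : Finset ι}

lemma setOf_eq_and_card_filter_le_eq (b : ι) (x : β) (j : ℕ) :
    {ω | X b ω = x ∧ #{t ∈ w | x ≤ X t ω} = j}
      = (⋂ t ∈ ({b} : Finset ι), X t ⁻¹' {x})
        ∩ {ω | (∀ t ∈ w, X t ω ∈ Set.Ici x ∪ Set.Iio x) ∧ #{t ∈ w | X t ω ∈ Set.Ici x} = j} := by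
  ext ω
  simp

lemma setOf_eq_and_card_filter_le_eq_inter_eq [DecidableEq ι] {a b c : ι} (hcb : c ≠ b)
    (hab : a ≠ b) (hac : a ≠ c) {x y : β} (hxy : x < y) (j : ℕ) :
    {ω | X b ω = x ∧ #{t ∈ insert a w | x ≤ X t ω} = j}
        ∩ {ω | X c ω = y ∧ #{t ∈ insert b w | y ≤ X t ω} = j ∧ X a ω < x}
      = (⋂ t ∈ ({c, b, a} : Finset ι),
          X t ⁻¹' (if t = c then {y} else if t = b then {x} else Set.Iio x))
        ∩ {ω | (∀ t ∈ w, X t ω ∈ Set.Ici y ∪ Set.Iio x) ∧ #{t ∈ w | X t ω ∈ Set.Ici y} = j} := by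
  ext ω
  simp only [set_biInter_insert, set_biInter_singleton, if_pos, if_neg hcb, if_neg hab, if_neg hac,
    if_neg hcb.symm, Set.mem_inter_iff, Set.mem_ofPred_eq, Set.mem_preimage,
    Set.mem_singleton_iff, Set.mem_Iio, Set.mem_Ici, Set.mem_union]
  have hfilter_a (ha : X a ω < x) : {t ∈ insert a w | x ≤ X t ω} = {t ∈ w | x ≤ X t ω} := by
    rw [filter_insert, if_neg ha.not_ge]
  have hfilter_b (hb : X b ω = x) : {t ∈ insert b w | y ≤ X t ω} = {t ∈ w | y ≤ X t ω} := by
    rw [filter_insert, if_neg (hb ▸ hxy.not_ge)]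
  have hcount := card_filter_eq_and_card_filter_eq_iff (s := w) (j := j)
    (p := fun t => x ≤ X t ω) (q := fun t => y ≤ X t ω) fun _ _ => hxy.le.trans
  constructor
  · rintro ⟨⟨hb, hx⟩, hc, hy, ha⟩
    rw [hfilter_a ha] at hx
    rw [hfilter_b hb] at hy
    obtain ⟨hxy', hy⟩ := hcount.1 ⟨hx, hy⟩
    exact ⟨⟨hc, hb, ha⟩, fun t ht => (lt_or_ge (X t ω) x).symm.imp_left (hxy' t ht), hy⟩
  · rintro ⟨⟨hc, hb, ha⟩, hw, hy⟩
    obtain ⟨hx, hy⟩ := hcount.2 ⟨fun t ht hxt => (hw t ht).resolve_right hxt.not_gt, hy⟩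
    exact ⟨⟨hb, hfilter_a ha ▸ hx⟩, hc, hfilter_b hb ▸ hy, ha⟩

variable [DecidableEq ι] [MeasurableSpace Ω] [MeasurableSpace β] [DiscreteMeasurableSpace β]
  {P : Measure Ω}

lemma nullMeasurableSet_setOf_eq_and_card_filter_le_eq (hX : ∀ a, AEMeasurable (X a) P) (b : ι)
    (x : β) (j : ℕ) : NullMeasurableSet {ω | X b ω = x ∧ #{t ∈ w | x ≤ X t ω} = j} P := by
  rw [setOf_eq_and_card_filter_le_eq]
  exact (nullMeasurableSet_biInter_preimage hX _ _).inter
    (nullMeasurableSet_setOf_card_filter_eq hX (Set.Ici_disjoint_Iio le_rfl) j)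

variable {Y : Ω → β}

lemma measure_setOf_eq_and_card_filter_le_eq_of_iid (hindep : iIndepFun X P)
    (hident : ∀ a, IdentDistrib (X a) Y P P) {b : ι} (hb : b ∉ w) (x : β) (j : ℕ) :
    P {ω | X b ω = x ∧ #{t ∈ w | x ≤ X t ω} = j}
      = (#w).choose j
          * (P (Y ⁻¹' {x}) * P (Y ⁻¹' Set.Ici x) ^ j * P (Y ⁻¹' Set.Iio x) ^ (#w - j)) := by
  rw [setOf_eq_and_card_filter_le_eq, measure_biInter_inter_card_filter_eq_of_iid hindep hident
    (disjoint_singleton_left.2 hb) _ (Set.Ici_disjoint_Iio (le_refl x)) j, prod_singleton]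

lemma measure_setOf_eq_and_card_filter_le_eq_inter_eq_of_iid (hindep : iIndepFun X P)
    (hident : ∀ a, IdentDistrib (X a) Y P P) {a b c : ι} (hcb : c ≠ b) (hab : a ≠ b) (hac : a ≠ c)
    (ha : a ∉ w) (hb : b ∉ w) (hc : c ∉ w) {x y : β} (hxy : x < y) (j : ℕ) :
    P ({ω | X b ω = x ∧ #{t ∈ insert a w | x ≤ X t ω} = j}
        ∩ {ω | X c ω = y ∧ #{t ∈ insert b w | y ≤ X t ω} = j ∧ X a ω < x})
      = (#w).choose j * (P (Y ⁻¹' {y}) * (P (Y ⁻¹' {x}) * P (Y ⁻¹' Set.Iio x))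
          * P (Y ⁻¹' Set.Ici y) ^ j * P (Y ⁻¹' Set.Iio x) ^ (#w - j)) := by
  have hdisj : Disjoint {c, b, a} w := by simp [ha, hb, hc]
  rw [setOf_eq_and_card_filter_le_eq_inter_eq hcb hab hac hxy,
    measure_biInter_inter_card_filter_eq_of_iid hindep hident hdisj _ (Set.Ici_disjoint_Iio hxy.le) j,
    prod_insert (by simp [hcb, hac.symm]), prod_insert (by simpa using hab.symm), prod_singleton,
    if_pos rfl, if_neg hcb.symm, if_pos rfl, if_neg hac, if_neg hab]

end RecordEvents

lemma choose_pred_mul_div_choose {k j : ℕ} (hk : 1 ≤ k) (hj : j ≤ k) {q p r s c : ℝ}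
    (h : (k.choose j : ℝ) * (p * s ^ j * c ^ (k - j)) ≠ 0) :
    ((k - 1).choose j : ℝ) * (q * (p * c) * r ^ j * c ^ (k - 1 - j))
        / ((k.choose j : ℝ) * (p * s ^ j * c ^ (k - j)))
      = (r / s) ^ j * ((k - j) / k) * q := by
  have hchoose : ((k - 1).choose j : ℝ) * k = k.choose j * (k - j) := by
    have := Nat.choose_mul_succ_eq (k - 1) j
    rw [Nat.sub_add_cancel hk] at this
    rw [← Nat.cast_sub hj]
    exact_mod_cast this
  have hpow : ((k - 1).choose j : ℝ) * (c * c ^ (k - 1 - j)) = (k - 1).choose j * c ^ (k - j) := by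
    rcases hj.lt_or_eq with hjk | rfl
    · rw [← pow_succ']
      congr 2
      omega
    · simp [Nat.choose_eq_zero_of_lt (Nat.sub_lt hk one_pos)]
  have hk0 : (k : ℝ) ≠ 0 := by positivity
  have hs : s ^ j ≠ 0 := fun hs => h (by rw [hs]; ring)
  rw [div_eq_iff h, div_pow]
  field_simp
  linear_combination (q * p * r ^ j * k) * hpow + (q * p * r ^ j * c ^ (k - j)) * hchoose

theorem recent_k_record_pred_gt_low_general
    {Ω : Type*} [MeasurableSpace Ω] (P : Measure Ω) [IsProbabilityMeasure P]
    (X : ℕ → Ω → ℕ)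
    (hindep : iIndepFun X P)
    (hident : ∀ a, IdentDistrib (X a) (X 1) P P)
    (k j : ℕ) (hk : 1 ≤ k) (hj : j ≤ k)
    (p S : ℕ → ℝ)
    (hp : ∀ l, p l = (P {ω | X 1 ω = l}).toReal)
    (hS : ∀ i, S i = (P {ω | i ≤ X 1 ω}).toReal)
    (n : ℕ) (hn : k + 1 ≤ n)
    (i m : ℕ) (him : i < m)
    (B : Set Ω)
    (hB : B = {ω | X n ω = i ∧
      ((Finset.Icc (n - k) (n - 1)).filter fun t => i ≤ X t ω).card = j})
    (hBpos : 0 < P B) :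
    ((P[|B]) {ω | X (n + 1) ω = m ∧
        ((Finset.Icc (n - k + 1) n).filter fun t => m ≤ X t ω).card = j ∧
        X (n - k) ω < i}).toReal
      = (S m / S i) ^ j * (((k : ℝ) - j) / k) * p m := by
  set W := Icc (n - k + 1) (n - 1)
  have hW : Icc (n - k) (n - 1) = insert (n - k) W :=
    (insert_Icc_add_one_left_eq_Icc (by omega)).symm
  have hW' : Icc (n - k + 1) n = insert n W := by
    have h := insert_Icc_right_eq_Icc_add_one (a := n - k + 1) (b := n - 1) (by omega)
    rwa [Nat.sub_add_cancel (by omega), eq_comm] at h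
  have hVcard : #(Icc (n - k) (n - 1)) = k := by simp only [Nat.card_Icc]; omega
  have hWcard : #W = k - 1 := by simp only [W, Nat.card_Icc]; omega
  have hp' : ∀ l, (P (X 1 ⁻¹' {l})).toReal = p l := fun l => (hp l).symm
  have hS' : ∀ l, (P (X 1 ⁻¹' Set.Ici l)).toReal = S l := fun l => (hS l).symm
  have hBnull : NullMeasurableSet B P := hB ▸
    nullMeasurableSet_setOf_eq_and_card_filter_le_eq (fun a => (hident a).aemeasurable_fst) n i j
  have hPB := measure_setOf_eq_and_card_filter_le_eq_of_iid hindep hident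
    (w := Icc (n - k) (n - 1)) (b := n) (by simp; omega) i j
  rw [hVcard, ← hB] at hPB
  have hPAB := measure_setOf_eq_and_card_filter_le_eq_inter_eq_of_iid hindep hident (w := W)
    (a := n - k) (b := n) (c := n + 1) (by omega) (by omega) (by omega) (by simp [W])
    (by simp [W]; omega) (by simp [W]) him j
  rw [hWcard, ← hW, ← hW', ← hB] at hPAB
  have hPBpos : (P B).toReal ≠ 0 := (ENNReal.toReal_pos hBpos.ne' (measure_ne_top P B)).ne'
  rw [cond_apply₀ hBnull, ENNReal.toReal_mul, ENNReal.toReal_inv, ← div_eq_inv_mul, hPAB, hPB]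
  rw [hPB] at hPBpos
  simp only [ENNReal.toReal_mul, ENNReal.toReal_pow, ENNReal.toReal_natCast, hp', hS'] at hPBpos ⊢
  exact choose_pred_mul_div_choose hk hj hPBpos

/-- Prediction step, case `m > i`, `X_{n-k} < i`. -/
theorem recent_k_record_pred_gt_low
    {Ω : Type*} [MeasurableSpace Ω] (P : Measure Ω) [IsProbabilityMeasure P]
    (X : ℕ → Ω → ℕ) (hXmeas : ∀ a, Measurable (X a))
    (hXpos : ∀ a ω, 1 ≤ X a ω)
    (hindep : iIndepFun X P)
    (hident : ∀ a, IdentDistrib (X a) (X 1) P P)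
    (k j : ℕ) (hk : 1 ≤ k) (hj : j ≤ k)
    (p S C : ℕ → ℝ)
    (hp : ∀ l, p l = (P {ω | X 1 ω = l}).toReal)
    (hS : ∀ i, S i = (P {ω | i ≤ X 1 ω}).toReal)
    (hC : ∀ i, C i = (P {ω | X 1 ω ≤ i}).toReal)
    (n : ℕ) (hn : k + 1 ≤ n)
    (i m : ℕ) (hi : 1 ≤ i) (him : i < m)
    (B : Set Ω)
    (hB : B = {ω | X n ω = i ∧
      ((Finset.Icc (n - k) (n - 1)).filter fun t => i ≤ X t ω).card = j})
    (hBpos : 0 < P B) :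
    ((P[|B]) {ω | X (n + 1) ω = m ∧
        ((Finset.Icc (n - k + 1) n).filter fun t => m ≤ X t ω).card = j ∧
        X (n - k) ω < i}).toReal
      = (S m / S i) ^ j * (((k : ℝ) - j) / k) * p m :=
  recent_k_record_pred_gt_low_general P X hindep hident k j hk hj p S hp hS n hn i m him B hB hBpos
end

section
/- Let n ≥ k+1 and let m < i be positive integers. Let B be the event {X_n = i and exactly j of X_{n-k}, …, X_{n-1} are ≥ i}, and assume P(B) > 0. Then P(X_{n+1} = m, exactly j of X_{n-k+1}, …, X_n are ≥ m, and X_{n-k} ≥ i | B) = (C_{m-1}/C_{i-1})^{k-j} · (j/k) · p_m. -/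
/-!
`B`, and its intersection with the event whose conditional probability is taken, are *binomial
patterns*: a few fixed times carry prescribed conditions, and among the times of a window `s`
exactly a given number of values fall in a set `A`, all others in a set `L` disjoint from `A`.
Splitting over which times fall in `A`, independence gives such a pattern the probability
`(∏ fixed factors) · (#s choose count) · P(A)^count · P(L)^(#s - count)`.

For `B` the window is the `k` times before `n`, with `A = [i, ∞)` and `L = [0, i)`. On the
intersection `X_n = i ≥ m` and `X_{n-k} ≥ i` are forced (so it is empty when `j = 0`), and since
`m < i` the two counts can only both equal `j` if no `X_t` with `n - k < t < n` falls in `[m, i)`: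
a pattern on a window of `k - 1` times with `A = [i, ∞)`, `L = [0, m)` and count `j - 1`. In the
ratio everything but `(C_{m-1}/C_{i-1})^{k-j} · p_m · binom(k-1, j-1) / binom(k, j)` cancels,
and the binomial quotient is `j / k`.
-/

open MeasureTheory ProbabilityTheory Finset

section Pattern

variable {Ω ι β : Type*} {X : ι → Ω → β}

theorem measure_iInter_preimage_eq_prod [MeasurableSpace Ω] [MeasurableSpace β] {P : Measure Ω}
    (hindep : iIndepFun X P) {a₀ : ι} (hident : ∀ a, IdentDistrib (X a) (X a₀) P P)
    (v : Finset ι) {F : ι → Set β} (hF : ∀ t ∈ v, MeasurableSet (F t)) :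
    P (⋂ t ∈ v, X t ⁻¹' F t) = ∏ t ∈ v, P (X a₀ ⁻¹' F t) := by
  rw [iIndepFun_iff_measure_inter_preimage_eq_mul.mp hindep v hF]
  exact prod_congr rfl fun t ht => (hident t).measure_mem_eq (hF t ht)

variable [DecidableEq ι]

def patternSets (s T : Finset ι) (D : ι → Set β) (A L : Set β) (t : ι) : Set β :=
  if t ∈ s then if t ∈ T then A else L else D t

variable {u s T : Finset ι} {D : ι → Set β} {A L : Set β}

theorem filter_mem_eq_of_mem_iInter_patternSets [DecidablePred (· ∈ A)] (hT : T ⊆ s)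
    (hAL : Disjoint A L) {ω : Ω}
    (hω : ω ∈ ⋂ t ∈ u ∪ s, X t ⁻¹' patternSets s T D A L t) :
    {t ∈ s | X t ω ∈ A} = T := by
  simp only [Set.mem_iInter, Set.mem_preimage, patternSets] at hω
  ext t
  by_cases hts : t ∈ s
  · have hωt := hω t (mem_union_right u hts)
    by_cases htT : t ∈ T
    · simp_all
    · simp only [hts, if_true, htT, if_false] at hωt
      simp [hts, htT, hAL.notMem_of_mem_right hωt]
  · simpa [hts] using fun h => hts (hT h)

theorem setOf_pattern_eq_biUnion [DecidablePred (· ∈ A)] (hus : Disjoint u s)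
    (hAL : Disjoint A L) (j : ℕ) :
    {ω | (∀ t ∈ u, X t ω ∈ D t) ∧ (∀ t ∈ s, X t ω ∈ A ∪ L) ∧ #{t ∈ s | X t ω ∈ A} = j}
      = ⋃ T ∈ s.powersetCard j, ⋂ t ∈ u ∪ s, X t ⁻¹' patternSets s T D A L t := by
  ext ω
  simp only [Set.mem_ofPred_eq, Set.mem_iUnion, mem_powersetCard, exists_prop]
  constructor
  · rintro ⟨hu, hs, hcard⟩
    refine ⟨{t ∈ s | X t ω ∈ A}, ⟨filter_subset _ _, hcard⟩, ?_⟩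
    simp only [Set.mem_iInter, Set.mem_preimage, patternSets, mem_union]
    rintro t (htu | hts)
    · simpa [disjoint_left.mp hus htu] using hu t htu
    · by_cases hA : X t ω ∈ A
      · simp [hts, hA]
      · simpa [hts, hA] using hs t hts
  · rintro ⟨T, ⟨hTs, rfl⟩, hω⟩
    refine ⟨fun t htu => ?_, fun t hts => ?_,
      by rw [filter_mem_eq_of_mem_iInter_patternSets hTs hAL hω]⟩
    · simp only [Set.mem_iInter, Set.mem_preimage, patternSets] at hω
      simpa [disjoint_left.mp hus htu] using hω t (mem_union_left s htu)
    · simp only [Set.mem_iInter, Set.mem_preimage, patternSets] at hω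
      have := hω t (mem_union_right u hts)
      split_ifs at this <;> simp [this]

theorem pairwiseDisjoint_iInter_patternSets [DecidablePred (· ∈ A)] (hAL : Disjoint A L)
    (j : ℕ) :
    (s.powersetCard j : Set (Finset ι)).PairwiseDisjoint
      fun T => ⋂ t ∈ u ∪ s, X t ⁻¹' patternSets s T D A L t :=
  (Set.pairwiseDisjoint_fiber (fun ω => {t ∈ s | X t ω ∈ A}) _).mono_on fun _ hT _ hω =>
    filter_mem_eq_of_mem_iInter_patternSets (mem_powersetCard.mp hT).1 hAL hω

variable [MeasurableSpace Ω] [MeasurableSpace β] {P : Measure Ω}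

theorem measurableSet_patternSets (hD : ∀ t ∈ u, MeasurableSet (D t)) (hA : MeasurableSet A)
    (hL : MeasurableSet L) : ∀ t ∈ u ∪ s, MeasurableSet (patternSets s T D A L t) := by
  intro t ht
  unfold patternSets
  split_ifs with hts
  exacts [hA, hL, hD t ((mem_union.mp ht).resolve_right hts)]

theorem measure_iInter_patternSets (hindep : iIndepFun X P) {a₀ : ι}
    (hident : ∀ a, IdentDistrib (X a) (X a₀) P P) (hus : Disjoint u s) (hT : T ⊆ s)
    (hD : ∀ t ∈ u, MeasurableSet (D t)) (hA : MeasurableSet A) (hL : MeasurableSet L) :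
    P (⋂ t ∈ u ∪ s, X t ⁻¹' patternSets s T D A L t)
      = (∏ t ∈ u, P (X a₀ ⁻¹' D t)) * (P (X a₀ ⁻¹' A) ^ #T * P (X a₀ ⁻¹' L) ^ (#s - #T)) := by
  rw [measure_iInter_preimage_eq_prod hindep hident _ (measurableSet_patternSets hD hA hL),
    prod_union hus]
  congr 1
  · exact prod_congr rfl fun t ht => by simp [patternSets, disjoint_left.mp hus ht]
  · calc ∏ t ∈ s, P (X a₀ ⁻¹' patternSets s T D A L t)
        = ∏ t ∈ s, T.piecewise (fun _ => P (X a₀ ⁻¹' A)) (fun _ => P (X a₀ ⁻¹' L)) t :=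
          prod_congr rfl fun t ht => by by_cases htT : t ∈ T <;> simp [patternSets, ht, htT]
      _ = _ := by
        rw [prod_piecewise, inter_eq_right.mpr hT, prod_const, prod_const,
          card_sdiff_of_subset hT]

theorem measure_setOf_pattern [DecidablePred (· ∈ A)] (hXmeas : ∀ a, Measurable (X a))
    (hindep : iIndepFun X P) {a₀ : ι} (hident : ∀ a, IdentDistrib (X a) (X a₀) P P)
    (hus : Disjoint u s) (hD : ∀ t ∈ u, MeasurableSet (D t)) (hA : MeasurableSet A)
    (hL : MeasurableSet L) (hAL : Disjoint A L) (j : ℕ) :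
    P {ω | (∀ t ∈ u, X t ω ∈ D t) ∧ (∀ t ∈ s, X t ω ∈ A ∪ L) ∧ #{t ∈ s | X t ω ∈ A} = j}
      = (∏ t ∈ u, P (X a₀ ⁻¹' D t))
        * ((#s).choose j * P (X a₀ ⁻¹' A) ^ j * P (X a₀ ⁻¹' L) ^ (#s - j)) := by
  have hpiece (T : Finset ι) : MeasurableSet (⋂ t ∈ u ∪ s, X t ⁻¹' patternSets s T D A L t) :=
    (u ∪ s).measurableSet_biInter fun t ht => hXmeas t (measurableSet_patternSets hD hA hL t ht)
  rw [setOf_pattern_eq_biUnion hus hAL, measure_biUnion_finset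
    (pairwiseDisjoint_iInter_patternSets hAL j) fun T _ => hpiece T,
    sum_congr rfl fun T hT => by
      rw [measure_iInter_patternSets hindep hident hus (mem_powersetCard.mp hT).1 hD hA hL,
        (mem_powersetCard.mp hT).2],
    sum_const, card_powersetCard, nsmul_eq_mul]
  ring

end Pattern

theorem measurable_card_filter {Ω ι : Type*} [MeasurableSpace Ω] {s : Finset ι}
    {p : ι → Ω → Prop} [∀ t ω, Decidable (p t ω)] (hp : ∀ t ∈ s, MeasurableSet {ω | p t ω}) :
    Measurable fun ω => #{t ∈ s | p t ω} := by
  simp only [card_filter]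
  exact s.measurable_sum fun t ht => Measurable.ite (hp t ht) measurable_const measurable_const

theorem Finset.card_filter_eq_card_filter_iff {α : Type*} {s : Finset α} {p q : α → Prop}
    [DecidablePred p] [DecidablePred q] (hpq : ∀ t ∈ s, p t → q t) :
    #{t ∈ s | p t} = #{t ∈ s | q t} ↔ ∀ t ∈ s, q t → p t := by
  constructor
  · intro h t ht hqt
    have hsub : {t ∈ s | p t} ⊆ {t ∈ s | q t} := fun t ht' => by
      rw [mem_filter] at ht' ⊢
      exact ⟨ht'.1, hpq t ht'.1 ht'.2⟩
    have hqt' : t ∈ {t ∈ s | q t} := mem_filter.mpr ⟨ht, hqt⟩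
    rw [← eq_of_subset_of_card_le hsub h.ge] at hqt'
    exact (mem_filter.mp hqt').2
  · intro h
    exact congrArg card (filter_congr fun t ht => ⟨hpq t ht, h t ht⟩)

theorem recent_record_inter_iff (x : ℕ → ℕ) {n k m i : ℕ} (hk : 1 ≤ k) (hn : k < n)
    (hmi : m < i) (j : ℕ) :
    ((x n = i ∧ #{t ∈ Icc (n - k) (n - 1) | i ≤ x t} = j + 1) ∧
      (x (n + 1) = m ∧ #{t ∈ Icc (n - k + 1) n | m ≤ x t} = j + 1 ∧ i ≤ x (n - k))) ↔
    (x (n + 1) = m ∧ x n = i ∧ i ≤ x (n - k)) ∧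
      (∀ t ∈ Icc (n - k + 1) (n - 1), i ≤ x t ∨ x t < m) ∧
      #{t ∈ Icc (n - k + 1) (n - 1) | i ≤ x t} = j := by
  set s := Icc (n - k + 1) (n - 1)
  have hr : Icc (n - k) (n - 1) = insert (n - k) s := by
    ext; simp only [mem_Icc, mem_insert, s]; omega
  have hs : Icc (n - k + 1) n = insert n s := by
    ext; simp only [mem_Icc, mem_insert, s]; omega
  have hnks : n - k ∉ s := by simp [s]
  have hns : n ∉ s := by simp [s]; omega
  have hlow : (∀ t ∈ s, m ≤ x t → i ≤ x t) ↔ ∀ t ∈ s, i ≤ x t ∨ x t < m :=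
    forall₂_congr fun t _ => by omega
  have hcard := card_filter_eq_card_filter_iff (s := s) (p := fun t => i ≤ x t)
    (q := fun t => m ≤ x t) fun t _ h => by omega
  constructor
  · rintro ⟨⟨hxn, hr_card⟩, hxn1, hs_card, hxnk⟩
    rw [hr, filter_insert, if_pos hxnk, card_insert_of_notMem (by simp [hnks])] at hr_card
    rw [hs, filter_insert, if_pos (by omega), card_insert_of_notMem (by simp [hns])] at hs_card
    exact ⟨⟨hxn1, hxn, hxnk⟩, hlow.mp (hcard.mp (by omega)), by omega⟩
  · rintro ⟨⟨hxn1, hxn, hxnk⟩, hlowx, hs_card⟩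
    rw [hr, hs, filter_insert, if_pos hxnk, card_insert_of_notMem (by simp [hnks]), filter_insert,
      if_pos (by omega), card_insert_of_notMem (by simp [hns]), ← hcard.mpr (hlow.mpr hlowx)]
    exact ⟨⟨hxn, by omega⟩, hxn1, by omega, hxnk⟩

section RecentRecord

variable {Ω : Type*} {X : ℕ → Ω → ℕ}

theorem setOf_recent_record_eq_pattern (n k i j : ℕ) :
    {ω | X n ω = i ∧ #{t ∈ Icc (n - k) (n - 1) | i ≤ X t ω} = j}
      = {ω | (∀ t ∈ ({n} : Finset ℕ), X t ω ∈ ({i} : Set ℕ)) ∧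
          (∀ t ∈ Icc (n - k) (n - 1), X t ω ∈ Set.Ici i ∪ Set.Iio i) ∧
          #{t ∈ Icc (n - k) (n - 1) | X t ω ∈ Set.Ici i} = j} := by
  ext ω
  simp only [Set.mem_ofPred_eq, mem_singleton, forall_eq, Set.mem_singleton_iff, Set.mem_union,
    Set.mem_Ici, Set.mem_Iio]
  exact and_congr_right fun _ => (and_iff_right fun t _ => le_or_gt i (X t ω)).symm

theorem recent_record_inter_eq_empty {n k : ℕ} (hk : 1 ≤ k) (hn : k < n) (m i : ℕ) :
    {ω | X n ω = i ∧ #{t ∈ Icc (n - k) (n - 1) | i ≤ X t ω} = 0} ∩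
      {ω | X (n + 1) ω = m ∧ #{t ∈ Icc (n - k + 1) n | m ≤ X t ω} = 0 ∧ i ≤ X (n - k) ω} = ∅ := by
  refine Set.eq_empty_of_forall_notMem fun ω ⟨⟨_, hcard⟩, _, _, hi⟩ => ?_
  exact card_filter_eq_zero_iff.mp hcard (n - k) (mem_Icc.mpr ⟨le_rfl, by omega⟩) hi

variable [MeasurableSpace Ω] {P : Measure Ω}

theorem measure_recent_record (hXmeas : ∀ a, Measurable (X a)) (hindep : iIndepFun X P)
    (hident : ∀ a, IdentDistrib (X a) (X 1) P P) {n k : ℕ} (hn : k < n) (i j : ℕ) :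
    P {ω | X n ω = i ∧ #{t ∈ Icc (n - k) (n - 1) | i ≤ X t ω} = j}
      = P (X 1 ⁻¹' {i}) * (k.choose j * P (X 1 ⁻¹' Set.Ici i) ^ j
          * P (X 1 ⁻¹' Set.Iio i) ^ (k - j)) := by
  have hdisj : Disjoint {n} (Icc (n - k) (n - 1)) := by simp; omega
  rw [setOf_recent_record_eq_pattern, measure_setOf_pattern hXmeas hindep hident hdisj
    (fun _ _ => .of_discrete) .of_discrete .of_discrete (Set.Iio_disjoint_Ici le_rfl).symm,
    prod_singleton, Nat.card_Icc, show n - 1 + 1 - (n - k) = k by omega]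

theorem measure_recent_record_inter (hXmeas : ∀ a, Measurable (X a)) (hindep : iIndepFun X P)
    (hident : ∀ a, IdentDistrib (X a) (X 1) P P) {n k m i : ℕ} (hk : 1 ≤ k) (hn : k < n)
    (hmi : m < i) (j : ℕ) :
    P ({ω | X n ω = i ∧ #{t ∈ Icc (n - k) (n - 1) | i ≤ X t ω} = j + 1} ∩
        {ω | X (n + 1) ω = m ∧ #{t ∈ Icc (n - k + 1) n | m ≤ X t ω} = j + 1 ∧ i ≤ X (n - k) ω})
      = P (X 1 ⁻¹' {m}) * (P (X 1 ⁻¹' {i}) * P (X 1 ⁻¹' Set.Ici i))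
        * ((k - 1).choose j * P (X 1 ⁻¹' Set.Ici i) ^ j
          * P (X 1 ⁻¹' Set.Iio m) ^ (k - 1 - j)) := by
  set D : ℕ → Set ℕ := fun t => if t = n + 1 then {m} else if t = n then {i} else Set.Ici i
  have hne₁ : n ≠ n + 1 := by omega
  have hne₂ : n - k ≠ n + 1 := by omega
  have hne₃ : n - k ≠ n := by omega
  have hdisj : Disjoint {n + 1, n, n - k} (Icc (n - k + 1) (n - 1)) := by simp; omega
  have hset : {ω | X n ω = i ∧ #{t ∈ Icc (n - k) (n - 1) | i ≤ X t ω} = j + 1} ∩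
        {ω | X (n + 1) ω = m ∧ #{t ∈ Icc (n - k + 1) n | m ≤ X t ω} = j + 1 ∧ i ≤ X (n - k) ω}
      = {ω | (∀ t ∈ ({n + 1, n, n - k} : Finset ℕ), X t ω ∈ D t) ∧
          (∀ t ∈ Icc (n - k + 1) (n - 1), X t ω ∈ Set.Ici i ∪ Set.Iio m) ∧
          #{t ∈ Icc (n - k + 1) (n - 1) | X t ω ∈ Set.Ici i} = j} := by
    ext ω
    refine (recent_record_inter_iff (fun t => X t ω) hk hn hmi j).trans ?_
    simp [D, hne₂, hne₃]
  rw [hset, measure_setOf_pattern hXmeas hindep hident hdisj (fun _ _ => .of_discrete)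
    .of_discrete .of_discrete (Set.Iio_disjoint_Ici hmi.le).symm, prod_insert (by simp; omega),
    prod_insert (by simp; omega), prod_singleton, Nat.card_Icc,
    show n - 1 + 1 - (n - k + 1) = k - 1 by omega]
  simp [D, hne₂, hne₃]

end RecentRecord

theorem inv_mul_choose_succ_eq {a b c d e : ℝ} (k j : ℕ)
    (h : a * ((k + 1).choose (j + 1) * b ^ (j + 1) * c ^ (k - j)) ≠ 0) :
    (a * ((k + 1).choose (j + 1) * b ^ (j + 1) * c ^ (k - j)))⁻¹
        * (d * (a * b) * (k.choose j * b ^ j * e ^ (k - j)))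
      = (e / c) ^ (k - j) * ((j + 1) / (k + 1)) * d := by
  have hchoose : ((k + 1).choose (j + 1) : ℝ) * (j + 1) = (k + 1) * k.choose j := by
    exact_mod_cast (Nat.add_one_mul_choose_eq k j).symm
  obtain ⟨ha, ⟨hK, hb⟩, hc⟩ :
      a ≠ 0 ∧ (((k + 1).choose (j + 1) : ℝ) ≠ 0 ∧ b ≠ 0) ∧ c ^ (k - j) ≠ 0 := by
    simpa [not_or] using h
  rw [div_pow]
  field_simp
  linear_combination (-(d * b ^ (j + 1) * e ^ (k - j))) * hchoose

theorem recent_k_record_pred_lt_high_general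
    {Ω : Type*} [MeasurableSpace Ω] (P : Measure Ω) [IsProbabilityMeasure P]
    (X : ℕ → Ω → ℕ) (hXmeas : ∀ a, Measurable (X a))
    (hindep : iIndepFun X P)
    (hident : ∀ a, IdentDistrib (X a) (X 1) P P)
    (k j : ℕ) (hk : 1 ≤ k)
    (p C : ℕ → ℝ)
    (hp : ∀ l, p l = (P {ω | X 1 ω = l}).toReal)
    (hC : ∀ i, C i = (P {ω | X 1 ω ≤ i}).toReal)
    (n : ℕ) (hn : k + 1 ≤ n)
    (m i : ℕ) (hm : 1 ≤ m) (hmi : m < i)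
    (B : Set Ω)
    (hB : B = {ω | X n ω = i ∧
      ((Finset.Icc (n - k) (n - 1)).filter fun t => i ≤ X t ω).card = j})
    (hBpos : 0 < P B) :
    ((P[|B]) {ω | X (n + 1) ω = m ∧
        ((Finset.Icc (n - k + 1) n).filter fun t => m ≤ X t ω).card = j ∧
        i ≤ X (n - k) ω}).toReal
      = (C (m - 1) / C (i - 1)) ^ (k - j) * ((j : ℝ) / k) * p m := by
  have hC_pred (a : ℕ) (ha : 1 ≤ a) : C (a - 1) = (P (X 1 ⁻¹' Set.Iio a)).toReal := by
    rw [hC]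
    congr 2
    ext ω
    simp only [Set.mem_ofPred_eq, Set.mem_preimage, Set.mem_Iio]
    omega
  have hBmeas : MeasurableSet B := hB ▸ (hXmeas n (measurableSet_singleton i)).inter
    (measurable_card_filter (fun t _ => hXmeas t measurableSet_Ici) (measurableSet_singleton j))
  have hPB : (P B).toReal ≠ 0 := (ENNReal.toReal_pos hBpos.ne' (measure_ne_top P B)).ne'
  rw [cond_apply hBmeas, hC_pred m hm, hC_pred i (by omega), hp m]
  subst hB
  obtain ⟨k, rfl⟩ : ∃ k', k = k' + 1 := ⟨k - 1, by omega⟩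
  rcases j with _ | j
  · rw [recent_record_inter_eq_empty hk hn, measure_empty]
    simp
  rw [measure_recent_record hXmeas hindep hident hn] at hPB ⊢
  rw [measure_recent_record_inter hXmeas hindep hident hk hn hmi]
  simp only [Nat.add_sub_add_right, Nat.add_sub_cancel, ENNReal.toReal_mul, ENNReal.toReal_inv,
    ENNReal.toReal_pow, ENNReal.toReal_natCast] at hPB ⊢
  push_cast
  exact inv_mul_choose_succ_eq k j hPB

/-- Prediction step, case `m < i`, `X_{n-k} ≥ i`. -/
theorem recent_k_record_pred_lt_high
    {Ω : Type*} [MeasurableSpace Ω] (P : Measure Ω) [IsProbabilityMeasure P]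
    (X : ℕ → Ω → ℕ) (hXmeas : ∀ a, Measurable (X a))
    (hXpos : ∀ a ω, 1 ≤ X a ω)
    (hindep : iIndepFun X P)
    (hident : ∀ a, IdentDistrib (X a) (X 1) P P)
    (k j : ℕ) (hk : 1 ≤ k) (hj : j ≤ k)
    (p S C : ℕ → ℝ)
    (hp : ∀ l, p l = (P {ω | X 1 ω = l}).toReal)
    (hS : ∀ i, S i = (P {ω | i ≤ X 1 ω}).toReal)
    (hC : ∀ i, C i = (P {ω | X 1 ω ≤ i}).toReal)
    (n : ℕ) (hn : k + 1 ≤ n)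
    (m i : ℕ) (hm : 1 ≤ m) (hmi : m < i)
    (B : Set Ω)
    (hB : B = {ω | X n ω = i ∧
      ((Finset.Icc (n - k) (n - 1)).filter fun t => i ≤ X t ω).card = j})
    (hBpos : 0 < P B) :
    ((P[|B]) {ω | X (n + 1) ω = m ∧
        ((Finset.Icc (n - k + 1) n).filter fun t => m ≤ X t ω).card = j ∧
        i ≤ X (n - k) ω}).toReal
      = (C (m - 1) / C (i - 1)) ^ (k - j) * ((j : ℝ) / k) * p m :=
  recent_k_record_pred_lt_high_general P X hXmeas hindep hident k j hk p C hp hC n hn m i hm hmi B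
    hB hBpos
end

section
/- Let n ≥ k+1 and let i be a positive integer. Let B be the event {X_n = i and exactly j of X_{n-k}, …, X_{n-1} are ≥ i}, and assume P(B) > 0. Then P(X_{n+1} = i and exactly j of X_{n-k+1}, …, X_n are ≥ i | B) = (j/k) · p_i. -/
/-!
On `B` we have `X n = i`, so sliding the window from `[n - k, n - 1]` to `[n - k + 1, n]` keeps
exactly `j` values `≥ i` iff the dropped value `X (n - k)` is one of them. Since `X (n + 1)` and
`X n` are independent of the window, the conditional probability factors as
`P (X (n + 1) = i) * P (X (n - k) ≥ i | exactly j window values are ≥ i)`. In the last factor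
every `j`-subset of the window is equally likely to be the set of positions of those values, as
the variables are i.i.d., and `n - k` lies in a fraction `j / k` of these subsets.
-/

open MeasureTheory ProbabilityTheory Finset
open scoped ENNReal

namespace Finset

lemma card_mul_card_filter_mem_powersetCard {α : Type*} [DecidableEq α] {W : Finset α} {a : α}
    (ha : a ∈ W) (j : ℕ) :
    #W * #{T ∈ W.powersetCard j | a ∈ T} = j * (#W).choose j := by
  rcases j with _ | j
  · simp
  obtain ⟨m, hm⟩ : ∃ m, #W = m + 1 := Nat.exists_eq_succ_of_ne_zero (card_ne_zero_of_mem ha)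
  have h := card_filter_powersetCard_subset {a} W (j + 1) (singleton_subset_iff.2 ha) (by simp)
  simp only [singleton_subset_iff, card_singleton, hm, add_tsub_cancel_right] at h
  rw [h, hm, Nat.add_one_mul_choose_eq, mul_comm]

lemma card_filter_Icc_add_one_add_ite {a c : ℕ} (h : a < c) (r : ℕ → Prop) [DecidablePred r] :
    #{t ∈ Icc (a + 1) c | r t} + (if r a then 1 else 0)
      = #{t ∈ Icc a (c - 1) | r t} + (if r c then 1 else 0) := by
  have hl : insert a (Icc (a + 1) c) = Icc a c := insert_Icc_add_one_left_eq_Icc h.le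
  have hr : insert c (Icc a (c - 1)) = Icc a c := insert_Icc_sub_one_right_eq_Icc h.le
  rw [card_filter, card_filter, add_comm,
    ← sum_insert (f := fun t => if r t then 1 else 0) (by simp), hl, ← hr,
    sum_insert (by simp; omega), add_comm]

lemma card_filter_Icc_add_one_eq_iff {a c j : ℕ} (h : a < c) {r : ℕ → Prop} [DecidablePred r]
    (hc : r c) (hj : #{t ∈ Icc a (c - 1) | r t} = j) :
    #{t ∈ Icc (a + 1) c | r t} = j ↔ r a := by
  have hshift := card_filter_Icc_add_one_add_ite h r
  rw [hj, if_pos hc] at hshift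
  split_ifs at hshift with ha <;> simp only [ha, iff_true, iff_false] <;> omega

end Finset

section IndependentFamily

variable {Ω ι α : Type*} {X : ι → Ω → α} {W : Finset ι}

lemma setOf_filter_eq_eq_biInter {q : α → Prop} [DecidablePred q] {T : Finset ι} (hT : T ⊆ W) :
    {ω | {t ∈ W | q (X t ω)} = T} = ⋂ t ∈ W, X t ⁻¹' {x | q x ↔ t ∈ T} := by
  ext ω
  simp only [Set.mem_ofPred_eq, Set.mem_iInter, Set.mem_preimage, Finset.ext_iff, mem_filter]
  exact ⟨fun h t ht => by simpa [ht] using h t,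
    fun h t => ⟨fun ⟨ht, hq⟩ => (h t ht).1 hq, fun htT => ⟨hT htT, (h t (hT htT)).2 htT⟩⟩⟩

variable [mα : MeasurableSpace α]

lemma measurable_iSup_comap {a : ι} (ha : a ∈ W) :
    Measurable[⨆ t ∈ W, mα.comap (X t)] (X a) :=
  (comap_measurable (X a)).mono (le_iSup₂ (f := fun t (_ : t ∈ W) => mα.comap (X t)) a ha) le_rfl

lemma measurable_card_filter_s8 {m : MeasurableSpace Ω} (hX : ∀ t ∈ W, Measurable[m] (X t))
    {q : α → Prop} [DecidablePred q] (hq : Measurable q) :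
    Measurable[m] fun ω => #{t ∈ W | q (X t ω)} := by
  simp_rw [card_filter]
  exact Finset.measurable_sum _ fun t ht =>
    Measurable.ite (hX t ht (measurableSet_setOfPred.2 hq)) measurable_const measurable_const

variable [mΩ : MeasurableSpace Ω] {P : Measure Ω}

lemma measure_preimage_inter_eq_mul_of_notMem (hindep : iIndepFun X P)
    (hmeas : ∀ t, Measurable (X t)) {a : ι} (ha : a ∉ W) {G : Set α} (hG : MeasurableSet G)
    {E : Set Ω} (hE : MeasurableSet[⨆ t ∈ W, mα.comap (X t)] E) :
    P (X a ⁻¹' G ∩ E) = P (X a ⁻¹' G) * P E := by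
  have hdisj : Disjoint ({a} : Set ι) ↑W := by simpa using ha
  have hind := indep_iSup_of_disjoint (fun t => (hmeas t).comap_le) hindep.iIndep hdisj
  exact (Indep_iff _ _ _).1 hind _ _
    (le_iSup₂ (f := fun t (_ : t ∈ ({a} : Set ι)) => mα.comap (X t)) a rfl _ ⟨G, hG, rfl⟩) hE

lemma measure_biInter_preimage_eq_prod (hindep : iIndepFun X P) {b : ι}
    (hident : ∀ t ∈ W, IdentDistrib (X t) (X b) P P) {G : ι → Set α}
    (hG : ∀ t, MeasurableSet (G t)) :
    P (⋂ t ∈ W, X t ⁻¹' G t) = ∏ t ∈ W, P (X b ⁻¹' G t) := by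
  rw [hindep.meas_biInter fun t _ => ⟨G t, hG t, rfl⟩]
  exact prod_congr rfl fun t ht => (hident t ht).measure_mem_eq (hG t)

variable [DecidableEq ι]

lemma cond_preimage_inter_eq_mul_cond [IsFiniteMeasure P] (hindep : iIndepFun X P)
    (hmeas : ∀ t, Measurable (X t)) {m m' : ι} (hm : m ∉ W) (hm' : m' ∉ insert m W)
    {G : Set α} (hG : MeasurableSet G) (hpos : P (X m ⁻¹' G) ≠ 0) {C D : Set Ω}
    (hC : MeasurableSet[⨆ t ∈ W, mα.comap (X t)] C)
    (hD : MeasurableSet[⨆ t ∈ W, mα.comap (X t)] D) :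
    P[X m' ⁻¹' G ∩ D | X m ⁻¹' G ∩ C] = P (X m' ⁻¹' G) * P[D | C] := by
  have hle : ⨆ t ∈ W, mα.comap (X t) ≤ mΩ := iSup₂_le fun t _ => (hmeas t).comap_le
  have hmono : ⨆ t ∈ W, mα.comap (X t) ≤ ⨆ t ∈ insert m W, mα.comap (X t) :=
    biSup_mono fun _ => mem_insert_of_mem
  have hset : X m ⁻¹' G ∩ C ∩ (X m' ⁻¹' G ∩ D) = X m' ⁻¹' G ∩ (X m ⁻¹' G ∩ (C ∩ D)) := by
    ext; simp only [Set.mem_inter_iff]; tauto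
  rw [cond_apply ((hmeas m hG).inter (hle _ hC)), cond_apply (hle _ hC), hset,
    measure_preimage_inter_eq_mul_of_notMem hindep hmeas hm' hG
      ((measurable_iSup_comap (mem_insert_self m W) hG).inter (hmono _ (hC.inter hD))),
    measure_preimage_inter_eq_mul_of_notMem hindep hmeas hm hG (hC.inter hD),
    measure_preimage_inter_eq_mul_of_notMem hindep hmeas hm hG hC, ENNReal.mul_inv (Or.inl hpos) (Or.inl (measure_ne_top _ _))]
  calc (P (X m ⁻¹' G))⁻¹ * (P C)⁻¹ * (P (X m' ⁻¹' G) * (P (X m ⁻¹' G) * P (C ∩ D)))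
      = ((P (X m ⁻¹' G))⁻¹ * P (X m ⁻¹' G)) * (P (X m' ⁻¹' G) * ((P C)⁻¹ * P (C ∩ D))) := by
        ring
    _ = P (X m' ⁻¹' G) * ((P C)⁻¹ * P (C ∩ D)) := by
        rw [ENNReal.inv_mul_cancel hpos (measure_ne_top _ _), one_mul]

variable {b : ι} {q : α → Prop} [DecidablePred q]

lemma measure_setOf_filter_eq (hindep : iIndepFun X P)
    (hident : ∀ t ∈ W, IdentDistrib (X t) (X b) P P) (hq : Measurable q) {T : Finset ι}
    (hT : T ⊆ W) :
    P {ω | {t ∈ W | q (X t ω)} = T}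
      = P {ω | q (X b ω)} ^ #T * P {ω | ¬ q (X b ω)} ^ (#W - #T) := by
  have hG : ∀ t, MeasurableSet {x | q x ↔ t ∈ T} := fun t =>
    measurableSet_setOfPred.2 (hq.iff measurable_const)
  rw [setOf_filter_eq_eq_biInter hT, measure_biInter_preimage_eq_prod hindep hident hG,
    ← prod_sdiff hT, ← card_sdiff_of_subset hT, mul_comm]
  congr 1
  · rw [← prod_const]
    exact prod_congr rfl fun t ht => by simp [ht, Set.preimage]
  · rw [← prod_const]
    exact prod_congr rfl fun t ht => by simp [(mem_sdiff.1 ht).2, Set.preimage]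

lemma card_mul_measure_card_filter_eq_inter (hindep : iIndepFun X P)
    (hmeas : ∀ t, Measurable (X t)) (hident : ∀ t ∈ W, IdentDistrib (X t) (X b) P P)
    (hq : Measurable q) {a : ι} (ha : a ∈ W) (j : ℕ) :
    #W * P ({ω | #{t ∈ W | q (X t ω)} = j} ∩ {ω | q (X a ω)})
      = j * P {ω | #{t ∈ W | q (X t ω)} = j} := by
  -- All `j`-subsets `T` of `W` are equally likely to be the set of hits.
  set c := P {ω | q (X b ω)} ^ j * P {ω | ¬ q (X b ω)} ^ (#W - j)
  have hpattern : ∀ T ∈ W.powersetCard j, P {ω | {t ∈ W | q (X t ω)} = T} = c := fun T hT => by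
    obtain ⟨hTW, hTj⟩ := mem_powersetCard.1 hT
    rw [measure_setOf_filter_eq hindep hident hq hTW, hTj]
  clear_value c
  have hmeasurable : ∀ T ∈ W.powersetCard j, MeasurableSet {ω | {t ∈ W | q (X t ω)} = T} :=
    fun T hT => by
      rw [setOf_filter_eq_eq_biInter (mem_powersetCard.1 hT).1]
      exact Finset.measurableSet_biInter _ fun t _ =>
        hmeas t (measurableSet_setOfPred.2 (hq.iff measurable_const))
  have hdisj : ∀ s : Finset (Finset ι), Set.PairwiseDisjoint ↑s
      fun T => {ω | {t ∈ W | q (X t ω)} = T} := fun s T _ T' _ hne =>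
    Set.disjoint_left.2 fun ω h h' => hne (h.symm.trans h')
  have hcount : {ω | #{t ∈ W | q (X t ω)} = j}
      = ⋃ T ∈ W.powersetCard j, {ω | {t ∈ W | q (X t ω)} = T} := by
    ext ω; simp
  have hcount_mem : {ω | #{t ∈ W | q (X t ω)} = j} ∩ {ω | q (X a ω)}
      = ⋃ T ∈ {T ∈ W.powersetCard j | a ∈ T}, {ω | {t ∈ W | q (X t ω)} = T} := by
    ext ω; simp [ha]
  rw [hcount_mem, hcount,
    measure_biUnion_finset (hdisj _) fun T hT => hmeasurable T (mem_filter.1 hT).1,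
    measure_biUnion_finset (hdisj _) hmeasurable,
    sum_congr rfl fun T hT => hpattern T (mem_filter.1 hT).1, sum_congr rfl hpattern, sum_const,
    sum_const, card_powersetCard, nsmul_eq_mul, nsmul_eq_mul, ← mul_assoc, ← mul_assoc]
  congr 1
  exact_mod_cast card_mul_card_filter_mem_powersetCard ha j

lemma cond_card_filter_eq_apply [IsFiniteMeasure P] (hindep : iIndepFun X P)
    (hmeas : ∀ t, Measurable (X t)) (hident : ∀ t ∈ W, IdentDistrib (X t) (X b) P P)
    (hq : Measurable q) {a : ι} (ha : a ∈ W) {j : ℕ}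
    (hpos : P {ω | #{t ∈ W | q (X t ω)} = j} ≠ 0) :
    P[{ω | q (X a ω)} | {ω | #{t ∈ W | q (X t ω)} = j}] = j / #W := by
  have hC : MeasurableSet {ω | #{t ∈ W | q (X t ω)} = j} :=
    measurable_card_filter_s8 (fun t _ => hmeas t) hq (measurableSet_singleton j)
  rw [cond_apply hC,
    ENNReal.eq_div_iff (Nat.cast_ne_zero.2 (card_ne_zero_of_mem ha)) (ENNReal.natCast_ne_top _),
    mul_left_comm, card_mul_measure_card_filter_eq_inter hindep hmeas hident hq ha j, mul_comm,
    mul_assoc, ENNReal.mul_inv_cancel hpos (measure_ne_top _ _), mul_one]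

end IndependentFamily

theorem recent_k_record_pred_eq_general
    {Ω : Type*} [MeasurableSpace Ω] (P : Measure Ω) [IsProbabilityMeasure P]
    (X : ℕ → Ω → ℕ) (hXmeas : ∀ a, Measurable (X a))
    (hindep : iIndepFun X P)
    (hident : ∀ a, IdentDistrib (X a) (X 1) P P)
    (k j : ℕ) (hk : 1 ≤ k)
    (p : ℕ → ℝ)
    (hp : ∀ l, p l = (P {ω | X 1 ω = l}).toReal)
    (n : ℕ) (hn : k + 1 ≤ n)
    (i : ℕ)
    (B : Set Ω)
    (hB : B = {ω | X n ω = i ∧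
      ((Finset.Icc (n - k) (n - 1)).filter fun t => i ≤ X t ω).card = j})
    (hBpos : 0 < P B) :
    ((P[|B]) {ω | X (n + 1) ω = i ∧
        ((Finset.Icc (n - k + 1) n).filter fun t => i ≤ X t ω).card = j}).toReal
      = ((j : ℝ) / k) * p i := by
  set W := Icc (n - k) (n - 1)
  set C := {ω | #{t ∈ W | i ≤ X t ω} = j}
  set R := {ω | i ≤ X (n - k) ω}
  have hq : Measurable (i ≤ · : ℕ → Prop) := .of_discrete
  have hoW : n - k ∈ W := mem_Icc.2 ⟨le_rfl, by omega⟩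
  have hBC : B = X n ⁻¹' {i} ∩ C := hB
  have hBmeas : MeasurableSet B := hBC ▸ (hXmeas n (measurableSet_singleton i)).inter
    (measurable_card_filter_s8 (fun t _ => hXmeas t) hq (measurableSet_singleton j))
  have hXnpos : P (X n ⁻¹' {i}) ≠ 0 :=
    (hBpos.trans_le (measure_mono (hBC ▸ Set.inter_subset_left))).ne'
  have hCpos : P C ≠ 0 := (hBpos.trans_le (measure_mono (hBC ▸ Set.inter_subset_right))).ne'
  have hslide : B ∩ {ω | X (n + 1) ω = i ∧ #{t ∈ Icc (n - k + 1) n | i ≤ X t ω} = j}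
      = B ∩ (X (n + 1) ⁻¹' {i} ∩ R) := by
    ext ω
    simp only [hB, R, Set.mem_inter_iff, Set.mem_ofPred_eq, Set.mem_preimage,
      Set.mem_singleton_iff]
    refine and_congr_right fun ⟨hXn, hCω⟩ => and_congr_right fun _ => ?_
    exact card_filter_Icc_add_one_eq_iff (by omega) hXn.ge hCω
  have hnext : P[X (n + 1) ⁻¹' {i} ∩ R | B] = P (X 1 ⁻¹' {i}) * P[R | C] := by
    rw [hBC, cond_preimage_inter_eq_mul_cond (C := C) (D := R) hindep hXmeas
      (by simp [W]; omega) (by simp [W]) (measurableSet_singleton i) hXnpos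
      (measurable_card_filter_s8 (fun t ht => measurable_iSup_comap ht) hq (measurableSet_singleton j))
      (measurable_iSup_comap hoW measurableSet_Ici),
      (hident (n + 1)).measure_mem_eq (measurableSet_singleton i)]
  have holdest : P[R | C] = j / k := by
    rw [cond_card_filter_eq_apply hindep hXmeas (fun t _ => hident t) hq hoW hCpos]
    congr
    simp [W]; omega
  have hpi : p i = (P (X 1 ⁻¹' {i})).toReal := hp i
  rw [← cond_inter_self hBmeas, hslide, cond_inter_self hBmeas, hnext, holdest, hpi,
    ENNReal.toReal_mul, ENNReal.toReal_div, ENNReal.toReal_natCast, ENNReal.toReal_natCast,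
    mul_comm]

/-- Prediction step, diagonal case `X_{n+1} = X_n = i`. -/
theorem recent_k_record_pred_eq
    {Ω : Type*} [MeasurableSpace Ω] (P : Measure Ω) [IsProbabilityMeasure P]
    (X : ℕ → Ω → ℕ) (hXmeas : ∀ a, Measurable (X a))
    (hXpos : ∀ a ω, 1 ≤ X a ω)
    (hindep : iIndepFun X P)
    (hident : ∀ a, IdentDistrib (X a) (X 1) P P)
    (k j : ℕ) (hk : 1 ≤ k) (hj : j ≤ k)
    (p S C : ℕ → ℝ)
    (hp : ∀ l, p l = (P {ω | X 1 ω = l}).toReal)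
    (hS : ∀ i, S i = (P {ω | i ≤ X 1 ω}).toReal)
    (hC : ∀ i, C i = (P {ω | X 1 ω ≤ i}).toReal)
    (n : ℕ) (hn : k + 1 ≤ n)
    (i : ℕ) (hi : 1 ≤ i)
    (B : Set Ω)
    (hB : B = {ω | X n ω = i ∧
      ((Finset.Icc (n - k) (n - 1)).filter fun t => i ≤ X t ω).card = j})
    (hBpos : 0 < P B) :
    ((P[|B]) {ω | X (n + 1) ω = i ∧
        ((Finset.Icc (n - k + 1) n).filter fun t => i ≤ X t ω).card = j}).toReal
      = ((j : ℝ) / k) * p i :=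
  recent_k_record_pred_eq_general P X hXmeas hindep hident k j hk p hp n hn i B hB hBpos
end

section
/- For every integer m with 1 ≤ m ≤ k and every i ≥ 1, E(ξ_i ξ_{i+m}) = Σ_{t = max(0, j-m)}^{min(k-m, j-1)} binom(m, j-t) · binom(m-1, j-t-1) · binom(k-m, t) · S_{i_0}^{2j-t-1} · (1 - S_{i_0})^{k+m-2j+t} · p_{i_0}^2 (the sum being empty, hence 0, when max(0, j-m) > min(k-m, j-1)). -/
/-!
On `E i ∩ E (i + m)` the positions `i + k` and `i + k + m` carry the value `i₀`, and the set `F`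
of the other positions `t ∈ [i, i + k + m)` with `X t ≥ i₀` meets the first window in `j` points
and the second in `j - 1` (position `i + k` supplies the last one); conversely these conditions
describe the event. By independence each admissible `F` has probability
`p² S^|F| (1 - S)^(k + m - 1 - |F|)`. Splitting the positions into blocks of sizes `m`, `k - m`,
`m - 1` and writing `t` for the number of points of `F` in the middle block, `F` has `j - t`
points in the first block and `j - t - 1` in the last, whence the binomial coefficients and
`|F| = 2j - t - 1`.
-/

open MeasureTheory ProbabilityTheory Finset

namespace Finset

variable {ι M : Type*} [AddCommMonoid M]

theorem union_inter_eq_left_of_disjoint [DecidableEq ι] {s t u : Finset ι} (hs : s ⊆ u)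
    (ht : Disjoint t u) : (s ∪ t) ∩ u = s := by
  rw [union_inter_distrib_right, inter_eq_left.2 hs, disjoint_iff_inter_eq_empty.1 ht, union_empty]

theorem sum_powerset_union_of_disjoint [DecidableEq ι] {s t : Finset ι} (hst : Disjoint s t)
    (f : Finset ι → M) :
    ∑ F ∈ (s ∪ t).powerset, f F = ∑ F₁ ∈ s.powerset, ∑ F₂ ∈ t.powerset, f (F₁ ∪ F₂) := by
  rw [← sum_product']
  refine sum_nbij' (fun F => (F ∩ s, F ∩ t)) (fun F => F.1 ∪ F.2) ?_ ?_ ?_ ?_ ?_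
  · simp [inter_subset_right]
  · simp only [mem_product, mem_powerset, and_imp, Prod.forall]
    exact fun F₁ F₂ h₁ h₂ => union_subset_union h₁ h₂
  · intro F hF
    rw [← inter_union_distrib_left, inter_eq_left.2 (mem_powerset.1 hF)]
  · simp only [mem_product, mem_powerset, and_imp, Prod.forall, Prod.mk.injEq]
    intro F₁ F₂ h₁ h₂
    exact ⟨union_inter_eq_left_of_disjoint h₁ (hst.symm.mono_left h₂),
      union_comm F₁ F₂ ▸ union_inter_eq_left_of_disjoint h₂ (hst.mono_left h₁)⟩
  · intro F hF
    rw [← inter_union_distrib_left, inter_eq_left.2 (mem_powerset.1 hF)]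

theorem sum_powerset_ite_card_mem (s : Finset ι) (T : Finset ℕ) (g : ℕ → M) :
    ∑ F ∈ s.powerset, (if #F ∈ T then g #F else 0) = ∑ n ∈ T, (#s).choose n • g n := by
  rw [sum_powerset_apply_card (fun n => if n ∈ T then g n else 0)]
  simp only [smul_ite, smul_zero, sum_ite_mem]
  refine sum_subset inter_subset_right fun n hnT hn => ?_
  have : #s < n := by simpa [hnT, Nat.lt_succ_iff] using hn
  rw [Nat.choose_eq_zero_of_lt this, zero_smul]

theorem sum_Icc_max_zero_toNat (lo hi : ℤ) (f : ℕ → M) :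
    ∑ t ∈ Icc (max 0 lo) hi, f t.toNat = ∑ n ∈ Ico lo.toNat (hi + 1).toNat, f n := by
  refine sum_nbij' Int.toNat (↑) ?_ ?_ ?_ ?_ fun _ _ => rfl <;>
    intro t ht <;> simp only [mem_Icc, mem_Ico] at ht ⊢ <;> omega

theorem card_union_union_inter_of_disjoint [DecidableEq ι] {A B C F₁ F₂ F₃ : Finset ι}
    (hAB : Disjoint A B) (hAC : Disjoint A C) (hBC : Disjoint B C) (h₁ : F₁ ⊆ A) (h₂ : F₂ ⊆ B)
    (h₃ : F₃ ⊆ C) :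
    #((F₁ ∪ F₂ ∪ F₃) ∩ (A ∪ B)) = #F₁ + #F₂ ∧ #((F₁ ∪ F₂ ∪ F₃) ∩ (B ∪ C)) = #F₂ + #F₃ ∧
      #(F₁ ∪ F₂ ∪ F₃) = #F₁ + #F₂ + #F₃ := by
  have e₁ : (F₁ ∪ F₂ ∪ F₃) ∩ (A ∪ B) = F₁ ∪ F₂ :=
    union_inter_eq_left_of_disjoint (union_subset_union h₁ h₂)
      ((disjoint_union_left.2 ⟨hAC, hBC⟩).symm.mono_left h₃)
  have e₂ : (F₁ ∪ F₂ ∪ F₃) ∩ (B ∪ C) = F₂ ∪ F₃ := by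
    rw [union_assoc, union_comm]
    exact union_inter_eq_left_of_disjoint (union_subset_union h₂ h₃)
      ((disjoint_union_right.2 ⟨hAB, hAC⟩).mono_left h₁)
  rw [e₁, e₂, card_union_of_disjoint (disjoint_union_left.2 ⟨hAC.mono h₁ h₃, hBC.mono h₂ h₃⟩),
    card_union_of_disjoint (hAB.mono h₁ h₂), card_union_of_disjoint (hBC.mono h₂ h₃)]
  exact ⟨rfl, rfl, rfl⟩

variable [DecidableEq ι]

/-- For `A = [i, i + m)`, `B = [i + m, i + k)`, `C = (i + k, i + k + m)`: the possible sets of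
positions in `A ∪ B ∪ C` where `X ≥ i₀` on `E i ∩ E (i + m)`. The count `j - 1` is written
`+ 1 = j` so that nothing qualifies when `j = 0`. -/
def overlapPatterns (A B C : Finset ι) (j : ℕ) : Finset (Finset ι) :=
  {F ∈ (A ∪ B ∪ C).powerset | #(F ∩ (A ∪ B)) = j ∧ #(F ∩ (B ∪ C)) + 1 = j}

theorem sum_overlapPatterns {A B C : Finset ι} (hAB : Disjoint A B) (hAC : Disjoint A C)
    (hBC : Disjoint B C) (j : ℕ) (w : ℕ → M) :
    ∑ F ∈ overlapPatterns A B C j, w #F = ∑ b ∈ range j,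
      ((#A).choose (j - b) * (#C).choose (j - b - 1) * (#B).choose b) • w (2 * j - b - 1) := by
  have hABC : Disjoint (A ∪ B) C := disjoint_union_left.2 ⟨hAC, hBC⟩
  -- for `b = #(F ∩ B)` the constraints say `#(F ∩ A) = j - b` and `#(F ∩ C) = j - b - 1`
  rw [overlapPatterns, sum_filter, sum_powerset_union_of_disjoint hABC,
    sum_powerset_union_of_disjoint hAB, sum_comm]
  calc _ = ∑ F₂ ∈ B.powerset, if #F₂ ∈ range j then
          ((#A).choose (j - #F₂) * (#C).choose (j - #F₂ - 1)) • w (2 * j - #F₂ - 1) else 0 := by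
        refine sum_congr rfl fun F₂ h₂ => ?_
        calc _ = ∑ F₁ ∈ A.powerset, ∑ F₃ ∈ C.powerset,
              if #F₂ ∈ range j then (if #F₁ ∈ ({j - #F₂} : Finset ℕ) then
                (if #F₃ ∈ ({j - #F₂ - 1} : Finset ℕ) then w (2 * j - #F₂ - 1) else 0) else 0)
              else 0 := by
              refine sum_congr rfl fun F₁ h₁ => sum_congr rfl fun F₃ h₃ => ?_
              obtain ⟨c₁, c₂, c₃⟩ := card_union_union_inter_of_disjoint hAB hAC hBC
                (mem_powerset.1 h₁) (mem_powerset.1 h₂) (mem_powerset.1 h₃)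
              rw [c₁, c₂, c₃]
              simp only [mem_range, mem_singleton]
              split_ifs <;> first | rfl | omega | (congr 1; omega)
          _ = _ := by
              simp only [sum_ite_irrel, sum_const_zero]
              rw [sum_powerset_ite_card_mem C _ fun _ => w (2 * j - #F₂ - 1), sum_singleton,
                sum_powerset_ite_card_mem A _ fun _ => _, sum_singleton, smul_smul]
    _ = _ := by
        rw [sum_powerset_ite_card_mem B (range j)
          (fun b => ((#A).choose (j - b) * (#C).choose (j - b - 1)) • w (2 * j - b - 1))]
        refine sum_congr rfl fun b _ => ?_
        rw [smul_smul, mul_comm]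

theorem subset_of_mem_overlapPatterns {A B C F : Finset ι} {j : ℕ}
    (hF : F ∈ overlapPatterns A B C j) : F ⊆ A ∪ B ∪ C :=
  mem_powerset.1 (mem_filter.1 hF).1

end Finset

theorem sum_range_choose_smul_eq_sum_Icc {R : Type*} [CommSemiring R] {k m : ℕ} (hmk : m ≤ k)
    (j : ℕ) (s q : R) :
    ∑ b ∈ range j, (m.choose (j - b) * (m - 1).choose (j - b - 1) * (k - m).choose b) •
        (s ^ (2 * j - b - 1) * q ^ (k + m - 1 - (2 * j - b - 1)))
      = ∑ t ∈ Icc (max 0 ((j : ℤ) - m)) (min ((k : ℤ) - m) ((j : ℤ) - 1)),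
          (m.choose (j - t.toNat) : R) * ((m - 1).choose (j - t.toNat - 1) : R)
            * ((k - m).choose t.toNat : R) * s ^ (2 * j - t.toNat - 1)
            * q ^ (k + m + t.toNat - 2 * j) := by
  rw [sum_Icc_max_zero_toNat _ _ fun n => (m.choose (j - n) : R) * ((m - 1).choose (j - n - 1) : R)
      * ((k - m).choose n : R) * s ^ (2 * j - n - 1) * q ^ (k + m + n - 2 * j),
    show ((j : ℤ) - m).toNat = j - m by omega,
    show (min ((k : ℤ) - m) ((j : ℤ) - 1) + 1).toNat = min (k - m + 1) j by omega]
  refine (sum_subset (fun b hb => ?_) fun b hb hbI => ?_).symm.trans (sum_congr rfl fun b hb => ?_)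
  · simp only [mem_Ico, mem_range] at hb ⊢
    omega
  · simp only [mem_Ico, mem_range, not_and_or, not_le, not_lt] at hb hbI
    rcases hbI with hb' | hb'
    · rw [Nat.choose_eq_zero_of_lt (show m < j - b by omega), zero_mul, zero_mul, zero_smul]
    · rw [Nat.choose_eq_zero_of_lt (show k - m < b by omega), mul_zero, zero_smul]
  · rw [mem_Ico] at hb
    rw [nsmul_eq_mul, show k + m - 1 - (2 * j - b - 1) = k + m + b - 2 * j by omega]
    push_cast
    ring

section Patterns

variable {Ω ι α β : Type*} {X : ι → Ω → α}

theorem setOf_and_mem_finset_eq_biUnion (R : Ω → Prop) (g : Ω → β)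
    (s : Finset β) : {ω | R ω ∧ g ω ∈ s} = ⋃ b ∈ s, {ω | R ω ∧ g ω = b} := by
  ext ω
  simp

variable [DecidableEq ι] {q : α → Prop} [DecidablePred q]

theorem setOf_forall_mem_and_filter_eq {K I F : Finset ι} (hKI : Disjoint K I) (hF : F ⊆ I)
    (D : Set α) :
    {ω | (∀ t ∈ K, X t ω ∈ D) ∧ {t ∈ I | q (X t ω)} = F}
      = ⋂ t ∈ K ∪ I, X t ⁻¹' (if t ∈ K then D else {v | q v ↔ t ∈ F}) := by
  ext ω
  simp only [Set.mem_ofPred_eq, Set.mem_iInter, Set.mem_preimage, mem_union, Finset.ext_iff,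
    mem_filter]
  constructor
  · rintro ⟨hK, hI⟩ t (ht | ht)
    · rw [if_pos ht]
      exact hK t ht
    · rw [if_neg (disjoint_right.1 hKI ht)]
      exact ⟨fun h => (hI t).1 ⟨ht, h⟩, fun h => ((hI t).2 h).2⟩
  · intro h
    refine ⟨fun t ht => by simpa [ht] using h t (.inl ht), fun t => ⟨fun ht => ?_, fun ht => ?_⟩⟩
    · have := h t (.inr ht.1)
      rw [if_neg (disjoint_right.1 hKI ht.1)] at this
      exact this.1 ht.2
    · have := h t (.inr (hF ht))
      rw [if_neg (disjoint_right.1 hKI (hF ht))] at this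
      exact ⟨hF ht, this.2 ht⟩

end Patterns

section IID

variable {Ω ι α : Type*} [MeasurableSpace Ω] [MeasurableSpace α] {P : Measure Ω}
  {X : ι → Ω → α} {Y : Ω → α}

theorem measureReal_biInter_preimage_eq_prod (hindep : iIndepFun X P)
    (hident : ∀ t, IdentDistrib (X t) Y P P) (J : Finset ι) {B : ι → Set α}
    (hB : ∀ t, MeasurableSet (B t)) :
    P.real (⋂ t ∈ J, X t ⁻¹' B t) = ∏ t ∈ J, P.real (Y ⁻¹' B t) := by
  simp only [measureReal_def]
  rw [hindep.meas_biInter fun t _ => ⟨B t, hB t, rfl⟩, ENNReal.toReal_prod]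
  exact prod_congr rfl fun t _ => by rw [(hident t).measure_mem_eq (hB t)]

variable [DecidableEq ι] {q : α → Prop}

theorem measurableSet_ite_setOf_iff_mem {D : Set α} (hD : MeasurableSet D)
    (hq : MeasurableSet {v | q v}) (K F : Finset ι) (t : ι) :
    MeasurableSet (if t ∈ K then D else {v | q v ↔ t ∈ F}) := by
  split_ifs
  · exact hD
  · by_cases ht : t ∈ F <;> simp only [ht, iff_true, iff_false]
    exacts [hq, hq.compl]

variable [DecidablePred q]

theorem measurableSet_forall_mem_and_filter_eq (hX : ∀ t, Measurable (X t)) {K I F : Finset ι}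
    (hKI : Disjoint K I) (hF : F ⊆ I) {D : Set α} (hD : MeasurableSet D)
    (hq : MeasurableSet {v | q v}) :
    MeasurableSet {ω | (∀ t ∈ K, X t ω ∈ D) ∧ {t ∈ I | q (X t ω)} = F} := by
  rw [setOf_forall_mem_and_filter_eq hKI hF]
  exact Finset.measurableSet_biInter _ fun t _ =>
    hX t (measurableSet_ite_setOf_iff_mem hD hq K F t)

theorem measureReal_forall_mem_and_filter_eq (hindep : iIndepFun X P)
    (hident : ∀ t, IdentDistrib (X t) Y P P) {K I F : Finset ι} (hKI : Disjoint K I)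
    (hF : F ⊆ I) {D : Set α} (hD : MeasurableSet D) (hq : MeasurableSet {v | q v}) :
    P.real {ω | (∀ t ∈ K, X t ω ∈ D) ∧ {t ∈ I | q (X t ω)} = F}
      = P.real (Y ⁻¹' D) ^ #K * P.real {ω | q (Y ω)} ^ #F
        * P.real {ω | ¬ q (Y ω)} ^ (#I - #F) := by
  rw [setOf_forall_mem_and_filter_eq hKI hF, measureReal_biInter_preimage_eq_prod hindep hident _
    (measurableSet_ite_setOf_iff_mem hD hq K F), prod_union hKI,
    prod_congr rfl fun t ht => by rw [if_pos ht], prod_const,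
    prod_congr rfl fun t ht => by rw [if_neg (disjoint_right.1 hKI ht)], mul_assoc]
  congr 1
  rw [← prod_filter_mul_prod_filter_not I (· ∈ F), filter_mem_eq_inter, inter_eq_right.2 hF,
    filter_notMem_eq_sdiff, ← card_sdiff_of_subset hF,
    prod_congr rfl fun t ht => by simp only [ht, iff_true]; rfl, prod_const,
    prod_congr rfl fun t ht => by simp only [(mem_sdiff.1 ht).2, iff_false]; rfl, prod_const]
  rfl

theorem measurableSet_forall_mem_and_filter_mem (hX : ∀ t, Measurable (X t))
    {K I : Finset ι} (hKI : Disjoint K I) {𝔽 : Finset (Finset ι)} (h𝔽 : ∀ F ∈ 𝔽, F ⊆ I)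
    {D : Set α} (hD : MeasurableSet D) (hq : MeasurableSet {v | q v}) :
    MeasurableSet {ω | (∀ t ∈ K, X t ω ∈ D) ∧ {t ∈ I | q (X t ω)} ∈ 𝔽} := by
  rw [setOf_and_mem_finset_eq_biUnion]
  exact 𝔽.measurableSet_biUnion fun F hF =>
    measurableSet_forall_mem_and_filter_eq hX hKI (h𝔽 F hF) hD hq

theorem measureReal_forall_mem_and_filter_mem [IsFiniteMeasure P] (hX : ∀ t, Measurable (X t))
    (hindep : iIndepFun X P) (hident : ∀ t, IdentDistrib (X t) Y P P) {K I : Finset ι}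
    (hKI : Disjoint K I) {𝔽 : Finset (Finset ι)} (h𝔽 : ∀ F ∈ 𝔽, F ⊆ I) {D : Set α}
    (hD : MeasurableSet D) (hq : MeasurableSet {v | q v}) :
    P.real {ω | (∀ t ∈ K, X t ω ∈ D) ∧ {t ∈ I | q (X t ω)} ∈ 𝔽}
      = ∑ F ∈ 𝔽, P.real (Y ⁻¹' D) ^ #K * P.real {ω | q (Y ω)} ^ #F
          * P.real {ω | ¬ q (Y ω)} ^ (#I - #F) := by
  rw [setOf_and_mem_finset_eq_biUnion, measureReal_biUnion_finset
    (fun F _ G _ hFG => Set.disjoint_left.2 fun ω hF hG => hFG (hF.2.symm.trans hG.2))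
    fun F hF => measurableSet_forall_mem_and_filter_eq hX hKI (h𝔽 F hF) hD hq]
  exact sum_congr rfl fun F hF =>
    measureReal_forall_mem_and_filter_eq hindep hident hKI (h𝔽 F hF) hD hq

end IID

theorem windows_iff_mem_overlapPatterns {x : ℕ → ℕ} {i₀ i k m j : ℕ} (hm : 1 ≤ m)
    (hmk : m ≤ k) :
    ((x (i + k) = i₀ ∧ #{t ∈ Ico i (i + k) | i₀ ≤ x t} = j) ∧
        x (i + m + k) = i₀ ∧ #{t ∈ Ico (i + m) (i + m + k) | i₀ ≤ x t} = j) ↔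
      (∀ t ∈ ({i + k, i + k + m} : Finset ℕ), x t ∈ ({i₀} : Set ℕ)) ∧
        {t ∈ Ico i (i + m) ∪ Ico (i + m) (i + k) ∪ Ico (i + k + 1) (i + k + m) | i₀ ≤ x t} ∈
          overlapPatterns (Ico i (i + m)) (Ico (i + m) (i + k)) (Ico (i + k + 1) (i + k + m))
            j := by
  set A := Ico i (i + m)
  set B := Ico (i + m) (i + k)
  set C := Ico (i + k + 1) (i + k + m)
  have hW₁ : Ico i (i + k) = A ∪ B := (Ico_union_Ico_eq_Ico (by omega) (by omega)).symm
  have hW₂ : Ico (i + m) (i + k + m) = insert (i + k) (B ∪ C) := by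
    ext t
    simp only [B, C, mem_Ico, mem_insert, mem_union]
    omega
  have hk : i + k ∉ B ∪ C := by
    simp only [B, C, mem_Ico, mem_union]
    omega
  have hsub : B ∪ C ⊆ A ∪ B ∪ C := by
    rw [union_assoc]
    exact subset_union_right
  rw [add_right_comm i m k]
  simp only [overlapPatterns, mem_filter, mem_powerset, filter_subset, true_and, filter_inter,
    inter_eq_right.2 (subset_union_left : A ∪ B ⊆ A ∪ B ∪ C), inter_eq_right.2 hsub,
    hW₁, hW₂, forall_mem_insert, mem_singleton, forall_eq, Set.mem_singleton_iff]
  constructor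
  · rintro ⟨⟨hx, h₁⟩, hx', h₂⟩
    rw [filter_insert, if_pos hx.ge, card_insert_of_notMem (mt (mem_of_mem_filter _) hk)] at h₂
    exact ⟨⟨hx, hx'⟩, h₁, h₂⟩
  · rintro ⟨⟨hx, hx'⟩, h₁, h₂⟩
    rw [filter_insert, if_pos hx.ge, card_insert_of_notMem (mt (mem_of_mem_filter _) hk)]
    exact ⟨⟨hx, h₁⟩, hx', h₂⟩

theorem sum_overlapPatterns_Ico {R : Type*} [CommSemiring R] {i k m : ℕ} (hm : 1 ≤ m)
    (hmk : m ≤ k) (j : ℕ) (s q : R) :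
    ∑ F ∈ overlapPatterns (Ico i (i + m)) (Ico (i + m) (i + k)) (Ico (i + k + 1) (i + k + m)) j,
        s ^ #F * q ^ (#(Ico i (i + m) ∪ Ico (i + m) (i + k) ∪ Ico (i + k + 1) (i + k + m)) - #F)
      = ∑ t ∈ Icc (max 0 ((j : ℤ) - m)) (min ((k : ℤ) - m) ((j : ℤ) - 1)),
          (m.choose (j - t.toNat) : R) * ((m - 1).choose (j - t.toNat - 1) : R)
            * ((k - m).choose t.toNat : R) * s ^ (2 * j - t.toNat - 1)
            * q ^ (k + m + t.toNat - 2 * j) := by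
  have hAB : Disjoint (Ico i (i + m)) (Ico (i + m) (i + k)) := Ico_disjoint_Ico_consecutive _ _ _
  have hAC : Disjoint (Ico i (i + m)) (Ico (i + k + 1) (i + k + m)) :=
    disjoint_left.2 fun t h₁ h₂ => by simp only [mem_Ico] at h₁ h₂; omega
  have hBC : Disjoint (Ico (i + m) (i + k)) (Ico (i + k + 1) (i + k + m)) :=
    disjoint_left.2 fun t h₁ h₂ => by simp only [mem_Ico] at h₁ h₂; omega
  have hcard :
      #(Ico i (i + m) ∪ Ico (i + m) (i + k) ∪ Ico (i + k + 1) (i + k + m)) = k + m - 1 := by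
    rw [card_union_of_disjoint (disjoint_union_left.2 ⟨hAC, hBC⟩), card_union_of_disjoint hAB]
    simp only [Nat.card_Ico]
    omega
  rw [hcard, sum_overlapPatterns hAB hAC hBC j fun n => s ^ n * q ^ (k + m - 1 - n), Nat.card_Ico,
    Nat.card_Ico, Nat.card_Ico, show i + m - i = m by omega, show i + k - (i + m) = k - m by omega,
    show i + k + m - (i + k + 1) = m - 1 by omega, sum_range_choose_smul_eq_sum_Icc hmk]

theorem recent_k_record_xi_overlap_general
    (k j : ℕ)
    {Ω : Type*} [MeasurableSpace Ω] (P : Measure Ω) [IsProbabilityMeasure P]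
    (X : ℕ → Ω → ℕ) (hXmeas : ∀ a, Measurable (X a))
    (hindep : iIndepFun X P)
    (hident : ∀ a, IdentDistrib (X a) (X 1) P P)
    (p S : ℕ → ℝ)
    (hp : ∀ l, p l = (P {ω | X 1 ω = l}).toReal)
    (hS : ∀ i, S i = (P {ω | i ≤ X 1 ω}).toReal)
    (i₀ : ℕ)
    (E : ℕ → Set Ω)
    (hE : ∀ a, E a = {ω | X (a + k) ω = i₀ ∧
      ((Finset.Ico a (a + k)).filter fun t => i₀ ≤ X t ω).card = j})
    (ξ : ℕ → Ω → ℝ) (hξ : ∀ a, ξ a = (E a).indicator 1)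
    (m : ℕ) (hm1 : 1 ≤ m) (hmk : m ≤ k) (i : ℕ) :
    ∫ ω, ξ i ω * ξ (i + m) ω ∂P
      = ∑ t ∈ Finset.Icc (max 0 ((j : ℤ) - (m : ℤ))) (min ((k : ℤ) - (m : ℤ)) ((j : ℤ) - 1)),
          (m.choose (j - t.toNat) : ℝ) * ((m - 1).choose (j - t.toNat - 1) : ℝ)
            * ((k - m).choose t.toNat : ℝ)
            * S i₀ ^ (2 * j - t.toNat - 1) * (1 - S i₀) ^ (k + m + t.toNat - 2 * j)
            * p i₀ ^ 2 := by
  set I := Ico i (i + m) ∪ Ico (i + m) (i + k) ∪ Ico (i + k + 1) (i + k + m)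
  set K : Finset ℕ := {i + k, i + k + m}
  set 𝔽 := overlapPatterns (Ico i (i + m)) (Ico (i + m) (i + k)) (Ico (i + k + 1) (i + k + m)) j
  have hKI : Disjoint K I := disjoint_left.2 fun t h₁ h₂ => by
    simp only [K, I, mem_insert, mem_singleton, mem_union, mem_Ico] at h₁ h₂; omega
  have hevent : E i ∩ E (i + m)
      = {ω | (∀ t ∈ K, X t ω ∈ ({i₀} : Set ℕ)) ∧ {t ∈ I | i₀ ≤ X t ω} ∈ 𝔽} := by
    ext ω
    simp only [Set.mem_inter_iff, hE, Set.mem_ofPred_eq]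
    exact windows_iff_mem_overlapPatterns (x := fun t => X t ω) hm1 hmk
  have hq : P.real {ω | ¬ i₀ ≤ X 1 ω} = 1 - S i₀ :=
    (probReal_compl_eq_one_sub (hXmeas 1 .of_discrete)).trans (by rw [hS]; rfl)
  calc ∫ ω, ξ i ω * ξ (i + m) ω ∂P = P.real (E i ∩ E (i + m)) := by
        rw [← integral_indicator_one (hevent ▸ measurableSet_forall_mem_and_filter_mem hXmeas hKI
          (fun _ => subset_of_mem_overlapPatterns) .of_discrete .of_discrete), hξ, hξ,
          Set.inter_indicator_one]
        rfl
    _ = p i₀ ^ 2 * ∑ F ∈ 𝔽, S i₀ ^ #F * (1 - S i₀) ^ (#I - #F) := by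
        rw [hevent, measureReal_forall_mem_and_filter_mem hXmeas hindep hident hKI
          (fun _ => subset_of_mem_overlapPatterns) .of_discrete .of_discrete, mul_sum,
          card_pair (by omega), hq, hp, hS]
        exact sum_congr rfl fun F _ => mul_assoc _ _ _
    _ = _ := by
        rw [sum_overlapPatterns_Ico hm1 hmk, mul_sum]
        exact sum_congr rfl fun t _ => mul_comm _ _

/-- For `1 ≤ m ≤ k` and `i ≥ 1`,
`E(ξᵢ ξ_{i+m}) = ∑_{t = max(0, j-m)}^{min(k-m, j-1)} C(m, j-t) C(m-1, j-t-1) C(k-m, t)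
  S_{i₀}^{2j-t-1} (1 - S_{i₀})^{k+m-2j+t} p_{i₀}²`
(the sum over the integer interval is empty when the lower bound exceeds the upper bound). -/
theorem recent_k_record_xi_overlap
    (k j : ℕ) (hk : 1 ≤ k) (hj : j ≤ k)
    {Ω : Type*} [MeasurableSpace Ω] (P : Measure Ω) [IsProbabilityMeasure P]
    (X : ℕ → Ω → ℕ) (hXmeas : ∀ a, Measurable (X a))
    (hXpos : ∀ a ω, 1 ≤ X a ω)
    (hindep : iIndepFun X P)
    (hident : ∀ a, IdentDistrib (X a) (X 1) P P)
    (p S : ℕ → ℝ)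
    (hp : ∀ l, p l = (P {ω | X 1 ω = l}).toReal)
    (hS : ∀ i, S i = (P {ω | i ≤ X 1 ω}).toReal)
    (i₀ : ℕ) (hi₀ : 1 ≤ i₀)
    (E : ℕ → Set Ω)
    (hE : ∀ a, E a = {ω | X (a + k) ω = i₀ ∧
      ((Finset.Ico a (a + k)).filter fun t => i₀ ≤ X t ω).card = j})
    (ξ : ℕ → Ω → ℝ) (hξ : ∀ a, ξ a = (E a).indicator 1)
    (m : ℕ) (hm1 : 1 ≤ m) (hmk : m ≤ k) (i : ℕ) (hi : 1 ≤ i) :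
    ∫ ω, ξ i ω * ξ (i + m) ω ∂P
      = ∑ t ∈ Finset.Icc (max 0 ((j : ℤ) - (m : ℤ))) (min ((k : ℤ) - (m : ℤ)) ((j : ℤ) - 1)),
          (m.choose (j - t.toNat) : ℝ) * ((m - 1).choose (j - t.toNat - 1) : ℝ)
            * ((k - m).choose t.toNat : ℝ)
            * S i₀ ^ (2 * j - t.toNat - 1) * (1 - S i₀) ^ (k + m + t.toNat - 2 * j)
            * p i₀ ^ 2 :=
  recent_k_record_xi_overlap_general k j P X hXmeas hindep hident p S hp hS i₀ E hE ξ hξ m hm1 hmk i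
end

section
/- For all integers k, j with 1 ≤ j ≤ k and every real S with 0 ≤ S ≤ 1, binom(k,j) · S^j · (1-S)^{k-j} ≤ (k e / j)^j · max( ((k-j)/k)^k , (j/k)^k ), where e is Euler's number. -/
/-!
Since `j ^ j / j! ≤ e ^ j`, the bound `C(k,j) ≤ k ^ j / j!` gives `C(k,j) ≤ (k e / j) ^ j`.
By weighted AM-GM, `S ^ j (1 - S) ^ (k - j)` is largest at `S = j / k`, where it equals
`(j / k) ^ j ((k - j) / k) ^ (k - j)`; this is at most the `k`-th power of the larger of
`j / k` and `(k - j) / k`.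
-/

open Real

theorem Nat.choose_le_mul_exp_div_pow (n r : ℕ) : (n.choose r : ℝ) ≤ (n * exp 1 / r) ^ r := by
  rcases r.eq_zero_or_pos with rfl | hr
  · simp
  have hr' : (r : ℝ) ^ r ≠ 0 := by positivity
  calc (n.choose r : ℝ) ≤ n ^ r / r.factorial := Nat.choose_le_pow_div r n
    _ = (n / r) ^ r * (r ^ r / r.factorial) := by
        rw [div_pow, ← mul_div_assoc, div_mul_cancel₀ _ hr']
    _ ≤ (n / r) ^ r * exp 1 ^ r := by
        gcongr
        rw [exp_one_pow]
        exact pow_div_factorial_le_exp _ r.cast_nonneg r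
    _ = (n * exp 1 / r) ^ r := by rw [← mul_pow, div_mul_eq_mul_div]

theorem pow_mul_pow_mul_add_pow_le {x y : ℝ} (hx : 0 ≤ x) (hy : 0 ≤ y) (m n : ℕ) :
    x ^ m * y ^ n * ((m : ℝ) + n) ^ (m + n) ≤
      (m : ℝ) ^ m * (n : ℝ) ^ n * (x + y) ^ (m + n) := by
  rcases n.eq_zero_or_pos with rfl | hn
  · simp only [pow_zero, mul_one, CharP.cast_eq_zero, add_zero]
    rw [mul_comm]
    gcongr
    linarith
  rcases m.eq_zero_or_pos with rfl | hm
  · simp only [pow_zero, one_mul, CharP.cast_eq_zero, zero_add]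
    rw [mul_comm]
    gcongr
    linarith
  have hN : (0 : ℝ) < m + n := by positivity
  have amgm := geom_mean_le_arith_mean2_weighted (w₁ := m / (m + n)) (w₂ := n / (m + n))
    (p₁ := x / m) (p₂ := y / n) (by positivity) (by positivity) (by positivity) (by positivity)
    (by rw [← add_div, div_self hN.ne'])
  have hpow := pow_le_pow_left₀ (by positivity) amgm (m + n)
  rw [mul_pow, ← rpow_natCast, ← rpow_natCast (_ ^ _), ← rpow_mul (by positivity),
    ← rpow_mul (by positivity), Nat.cast_add, div_mul_cancel₀ _ hN.ne',
    div_mul_cancel₀ _ hN.ne', rpow_natCast, rpow_natCast] at hpow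
  have hmean : (m : ℝ) / (m + n) * (x / m) + n / (m + n) * (y / n) = (x + y) / (m + n) := by
    field_simp
  rw [hmean, div_pow, div_pow, div_pow, div_mul_div_comm, div_le_div_iff₀ (by positivity)
    (by positivity)] at hpow
  linarith

theorem pow_mul_pow_le_max_pow_add {R : Type*} [Semiring R] [LinearOrder R] [IsOrderedRing R]
    {a b : R} (ha : 0 ≤ a) (hb : 0 ≤ b) (m n : ℕ) :
    a ^ m * b ^ n ≤ max (a ^ (m + n)) (b ^ (m + n)) := by
  rw [pow_add, pow_add]
  rcases le_total a b with h | h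
  · exact le_max_of_le_right (by gcongr)
  · exact le_max_of_le_left (by gcongr)

/-- For `1 ≤ j ≤ k` and `S ∈ [0,1]`,
`C(k,j) S^j (1-S)^{k-j} ≤ (k e / j)^j max(((k-j)/k)^k, (j/k)^k)`. -/
theorem choose_mul_pow_le_max
    (k j : ℕ) (hj1 : 1 ≤ j) (hjk : j ≤ k)
    (S : ℝ) (hS0 : 0 ≤ S) (hS1 : S ≤ 1) :
    (k.choose j : ℝ) * S ^ j * (1 - S) ^ (k - j)
      ≤ ((k : ℝ) * Real.exp 1 / j) ^ j
          * max ((((k : ℝ) - j) / k) ^ k) (((j : ℝ) / k) ^ k) := by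
  obtain ⟨n, rfl⟩ := Nat.exists_eq_add_of_le hjk
  have hpeak : S ^ j * (1 - S) ^ n ≤ (j / (j + n)) ^ j * (n / (j + n)) ^ n := by
    have h := pow_mul_pow_mul_add_pow_le hS0 (sub_nonneg.2 hS1) j n
    rwa [add_sub_cancel, one_pow, mul_one, ← le_div_iff₀ (by positivity), pow_add,
      ← div_mul_div_comm, ← div_pow, ← div_pow] at h
  rw [Nat.add_sub_cancel_left, mul_assoc]
  push_cast
  rw [add_sub_cancel_left, max_comm]
  gcongr
  · exact_mod_cast Nat.choose_le_mul_exp_div_pow (j + n) j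
  · exact hpeak.trans (pow_mul_pow_le_max_pow_add (by positivity) (by positivity) j n)
end
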